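/- arXiv:1802.09444 — 9 statements merged into one kernel-verified Lean document; each statement's English description precedes it below -/
import Mathlib

section
/- Let (Ω, ℙ) be a probability space, λ > 0, and T : Ω → ℝ a nonnegative random variable with ℙ(T > t) = exp(−λ t) for all t ≥ 0. Let S be a measurable space and Y : Ω → S a measurable map. Suppose that for every t > 0, every integer n ≥ 1, and every measurable set A ⊆ S, ℙ(Y ∈ A and (n−1)t < T ≤ nt) = ℙ(Y ∈ A and T ≤ t)·exp(−λ(n−1)t). Then T and Y are independent random variables. -/
/-! Summing the hypothesis over `n ≥ 1` slices `{T > 0}` into the intervals `((n-1)t, nt]`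
and gives `P(Y ∈ A, T > 0) = P(Y ∈ A, T ≤ t) / (1 - e^{-lt})`. As `T > 0` almost surely and
`P(T ≤ t) = 1 - e^{-lt}`, this is `P(Y ∈ A, T ≤ t) = P(Y ∈ A) P(T ≤ t)`, and the sets
`{T ≤ t}` determine the law of `T`. -/

open MeasureTheory ProbabilityTheory Set

section Slicing

variable {Ω : Type*} [MeasurableSpace Ω] {P : Measure Ω} {T : Ω → ℝ}

theorem measure_inter_preimage_Ioi_eq_tsum {E : Set Ω} (hE : MeasurableSet E)
    (hT : Measurable T) {f : ℕ → ℝ} (hf : Monotone f) (hf_top : ¬BddAbove (range f)) :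
    P (E ∩ T ⁻¹' Ioi (f 0)) = ∑' n, P (E ∩ T ⁻¹' Ioc (f n) (f (n + 1))) := by
  have hU := iUnion_Ioc_map_succ_eq_Ioi (fun n => hf (Nat.zero_le n)) hf_top
  simp only [Order.succ_eq_add_one, Nat.bot_eq_zero] at hU
  rw [← hU, preimage_iUnion, inter_iUnion,
    measure_iUnion _ fun n => hE.inter (hT measurableSet_Ioc)]
  intro m n hmn
  have := hf.pairwise_disjoint_on_Ioc_succ hmn
  simp only [Order.succ_eq_add_one, Function.onFun] at this ⊢
  exact ((this.preimage T).inter_left' E).inter_right' E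

theorem measure_inter_preimage_Ioi_mul_one_sub_of_geometric {E : Set Ω} (hE : MeasurableSet E)
    (hT : Measurable T) {t : ℝ} (ht : 0 < t) {c r : ENNReal} (hr : r < 1)
    (h : ∀ n : ℕ, P (E ∩ T ⁻¹' Ioc (n * t) ((n + 1) * t)) = c * r ^ n) :
    P (E ∩ T ⁻¹' Ioi 0) * (1 - r) = c := by
  have hmono : Monotone fun n : ℕ => n * t := fun _ _ hmn => by dsimp only; gcongr
  have hunb : ¬BddAbove (range fun n : ℕ => n * t) := by
    rintro ⟨b, hb⟩
    obtain ⟨n, hn⟩ := exists_nat_gt (b / t)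
    exact absurd (hb ⟨n, rfl⟩) (not_le.2 ((div_lt_iff₀ ht).1 hn))
  have hsum := measure_inter_preimage_Ioi_eq_tsum (P := P) hE hT hmono hunb
  simp only [Nat.cast_zero, zero_mul, Nat.cast_add, Nat.cast_one, h] at hsum
  rw [hsum, ENNReal.tsum_mul_left, ENNReal.tsum_geometric, mul_assoc,
    ENNReal.inv_mul_cancel (tsub_pos_of_lt hr).ne' (ENNReal.sub_ne_top ENNReal.one_ne_top),
    mul_one]

theorem indepFun_of_measure_preimage_Iic_inter [IsFiniteMeasure P] {S : Type*}
    [MeasurableSpace S] {Y : Ω → S} (hT : Measurable T)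
    (h : ∀ a A, MeasurableSet A →
      P (T ⁻¹' Iic a ∩ Y ⁻¹' A) = P (T ⁻¹' Iic a) * P (Y ⁻¹' A)) :
    IndepFun T Y P := by
  rw [indepFun_iff_measure_inter_preimage_eq_mul]
  intro s A hs hA
  have hext : (P.restrict (Y ⁻¹' A)).map T = P (Y ⁻¹' A) • P.map T := by
    refine Measure.ext_of_Iic _ _ fun a => ?_
    rw [Measure.map_apply hT measurableSet_Iic, Measure.restrict_apply (hT measurableSet_Iic),
      Measure.smul_apply, Measure.map_apply hT measurableSet_Iic, smul_eq_mul, h a A hA, mul_comm]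
  have := congrArg (· s) hext
  simp only [Measure.map_apply hT hs, Measure.restrict_apply (hT hs), Measure.smul_apply,
    smul_eq_mul] at this
  rw [this, mul_comm]

end Slicing

theorem indep_of_exit_time_identity_general
    {Ω S : Type*} [MeasurableSpace Ω] [MeasurableSpace S]
    (P : Measure Ω) [IsProbabilityMeasure P]
    (l : ℝ) (hl : 0 < l)
    (T : Ω → ℝ) (hTmeas : Measurable T)
    (hsurv : ∀ t : ℝ, 0 ≤ t →
      P {ω | t < T ω} = ENNReal.ofReal (Real.exp (-l * t)))
    (Y : Ω → S) (hYmeas : Measurable Y)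
    (hkey : ∀ t : ℝ, 0 < t → ∀ n : ℕ, 1 ≤ n → ∀ A : Set S, MeasurableSet A →
      P {ω | Y ω ∈ A ∧ ((n : ℝ) - 1) * t < T ω ∧ T ω ≤ (n : ℝ) * t}
        = P {ω | Y ω ∈ A ∧ T ω ≤ t}
            * ENNReal.ofReal (Real.exp (-l * (((n : ℝ) - 1) * t)))) :
    ProbabilityTheory.IndepFun T Y P := by
  have hT_pos : P (T ⁻¹' Ioi 0)ᶜ = 0 := by
    rw [prob_compl_eq_zero_iff (hTmeas measurableSet_Ioi)]
    exact (hsurv 0 le_rfl).trans (by simp)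
  have hcdf : ∀ t, 0 ≤ t → P (T ⁻¹' Iic t) = 1 - ENNReal.ofReal (Real.exp (-l * t)) := by
    intro t ht
    rw [← compl_Ioi, preimage_compl, prob_compl_eq_one_sub (hTmeas measurableSet_Ioi)]
    exact congrArg _ (hsurv t ht)
  refine indepFun_of_measure_preimage_Iic_inter hTmeas fun a A hA => ?_
  rcases le_or_gt a 0 with ha | ha
  · have hnull : P (T ⁻¹' Iic a) = 0 :=
      measure_mono_null (fun ω hω => not_lt.2 (le_trans hω ha)) hT_pos
    rw [hnull, zero_mul]
    exact measure_mono_null inter_subset_left hnull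
  · have hr : ENNReal.ofReal (Real.exp (-l * a)) < 1 := by
      rw [ENNReal.ofReal_lt_one, Real.exp_lt_one_iff]
      nlinarith
    rw [hcdf a ha.le, inter_comm, ← measure_inter_conull hT_pos (s := Y ⁻¹' A), mul_comm]
    refine (measure_inter_preimage_Ioi_mul_one_sub_of_geometric (hYmeas hA) hTmeas ha hr
      fun n => ?_).symm
    have hslice := hkey a ha (n + 1) n.succ_pos A hA
    push_cast at hslice
    rw [add_sub_cancel_right] at hslice
    rw [← ENNReal.ofReal_pow (Real.exp_pos _).le, ← Real.exp_nat_mul, mul_left_comm]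
    exact hslice

/-- If `T` is exponentially distributed with rate `l` and, for every
`t > 0`, every `n ≥ 1` and every measurable `A`,
`P(Y ∈ A, (n-1)t < T ≤ nt) = P(Y ∈ A, T ≤ t) · exp(-l·(n-1)·t)`,
then `T` and `Y` are independent. -/
theorem indep_of_exit_time_identity
    {Ω S : Type*} [MeasurableSpace Ω] [MeasurableSpace S]
    (P : Measure Ω) [IsProbabilityMeasure P]
    (l : ℝ) (hl : 0 < l)
    (T : Ω → ℝ) (hTmeas : Measurable T) (hTnonneg : ∀ ω, 0 ≤ T ω)
    (hsurv : ∀ t : ℝ, 0 ≤ t →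
      P {ω | t < T ω} = ENNReal.ofReal (Real.exp (-l * t)))
    (Y : Ω → S) (hYmeas : Measurable Y)
    (hkey : ∀ t : ℝ, 0 < t → ∀ n : ℕ, 1 ≤ n → ∀ A : Set S, MeasurableSet A →
      P {ω | Y ω ∈ A ∧ ((n : ℝ) - 1) * t < T ω ∧ T ω ≤ (n : ℝ) * t}
        = P {ω | Y ω ∈ A ∧ T ω ≤ t}
            * ENNReal.ofReal (Real.exp (-l * (((n : ℝ) - 1) * t)))) :
    ProbabilityTheory.IndepFun T Y P :=
  indep_of_exit_time_identity_general P l hl T hTmeas hsurv Y hYmeas hkey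
end

section
/- Let (Ω, ℙ) be a probability space and λ > 0. Let (t_m)_{m≥1} be nonnegative real numbers with ∑_{m≥1} t_m = ∞, and set s_0 = 0 and s_m = t_1 + … + t_m. Let (τ_m)_{m≥1} be nonnegative real-valued random variables such that ℙ(τ_1 > t) = exp(−λt) for all t ≥ 0 and, for every m ≥ 2 and every t ≥ 0, the conditional probability ℙ(τ_m > t ∣ τ_1 > t_1, …, τ_{m−1} > t_{m−1}) = exp(−λt). Define L = inf{m ≥ 1 : τ_m ≤ t_m}. Then L is finite almost surely, and the random variable s_{L−1} + τ_L satisfies ℙ(s_{L−1} + τ_L > t) = exp(−λt) for all t ≥ 0, i.e. it is exponentially distributed with rate λ. -/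
open MeasureTheory Filter

namespace ParallelStepAux

/-- Partial sums of the fragment lengths. -/
noncomputable def S (t : ℕ → ℝ) (m : ℕ) : ℝ := ∑ i ∈ Finset.Icc 1 m, t i

/-- The survival event up to fragment `m`. -/
def A {Ω : Type*} (t : ℕ → ℝ) (τ : ℕ → Ω → ℝ) (m : ℕ) : Set Ω :=
  ⋂ j ∈ Finset.Icc 1 m, {ω | t j < τ j ω}

lemma S_zero (t : ℕ → ℝ) : S t 0 = 0 := by simp [S]

lemma S_succ (t : ℕ → ℝ) (m : ℕ) : S t (m + 1) = S t m + t (m + 1) := by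
  unfold S
  rw [← Finset.insert_Icc_right_eq_Icc_add_one (by omega), Finset.sum_insert (by simp)]
  ring

lemma S_mono {t : ℕ → ℝ} (ht : ∀ m, 0 ≤ t m) : Monotone (S t) :=
  monotone_nat_of_le_succ fun n => by rw [S_succ]; linarith [ht (n + 1)]

lemma S_nonneg {t : ℕ → ℝ} (ht : ∀ m, 0 ≤ t m) (m : ℕ) : 0 ≤ S t m := by
  have := S_mono ht (Nat.zero_le m); rwa [S_zero] at this

lemma A_zero {Ω : Type*} (t : ℕ → ℝ) (τ : ℕ → Ω → ℝ) : A t τ 0 = Set.univ := by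
  simp [A]

lemma A_succ {Ω : Type*} (t : ℕ → ℝ) (τ : ℕ → Ω → ℝ) (m : ℕ) :
    A t τ (m + 1) = {ω | t (m + 1) < τ (m + 1) ω} ∩ A t τ m := by
  unfold A
  rw [← Finset.insert_Icc_right_eq_Icc_add_one (by omega), Finset.set_biInter_insert]

lemma A_mem {Ω : Type*} {t : ℕ → ℝ} {τ : ℕ → Ω → ℝ} {m : ℕ} {ω : Ω} :
    ω ∈ A t τ m ↔ ∀ j, 1 ≤ j → j ≤ m → t j < τ j ω := by
  simp [A, Finset.mem_Icc]

lemma A_meas {Ω : Type*} [MeasurableSpace Ω] {t : ℕ → ℝ} {τ : ℕ → Ω → ℝ}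
    (hτ : ∀ m, Measurable (τ m)) (m : ℕ) : MeasurableSet (A t τ m) :=
  Finset.measurableSet_biInter _ fun j _ => measurableSet_lt measurable_const (hτ j)

lemma A_anti {Ω : Type*} (t : ℕ → ℝ) (τ : ℕ → Ω → ℝ) : Antitone (A t τ) := by
  intro a b hab ω hω
  rw [A_mem] at hω ⊢
  exact fun j h1 h2 => hω j h1 (h2.trans hab)

section Main

variable {Ω : Type*} [MeasurableSpace Ω] (P : Measure Ω) [IsProbabilityMeasure P]
  (l : ℝ) (t : ℕ → ℝ) (τ : ℕ → Ω → ℝ)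

/-- Probability of the survival events. -/
lemma PA (ht : ∀ m, 0 ≤ t m)
    (h1 : ∀ u : ℝ, 0 ≤ u → P {ω | u < τ 1 ω} = ENNReal.ofReal (Real.exp (-l * u)))
    (hrec : ∀ m, 2 ≤ m → ∀ u : ℝ, 0 ≤ u →
      P ({ω | u < τ m ω} ∩ ⋂ j ∈ Finset.Icc 1 (m - 1), {ω | t j < τ j ω})
          / P (⋂ j ∈ Finset.Icc 1 (m - 1), {ω | t j < τ j ω})
        = ENNReal.ofReal (Real.exp (-l * u))) :
    ∀ m, P (A t τ m) = ENNReal.ofReal (Real.exp (-l * S t m)) := by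
  intro m
  induction m with
  | zero => simp [A_zero, S_zero]
  | succ n ih =>
    rw [A_succ, S_succ]
    rcases Nat.eq_zero_or_pos n with hn | hn
    · subst hn
      rw [A_zero, Set.inter_univ, h1 (t 1) (ht 1), S_zero]
      norm_num
    · have h2 : 2 ≤ n + 1 := by omega
      have hA' : (⋂ j ∈ Finset.Icc 1 (n + 1 - 1), {ω | t j < τ j ω}) = A t τ n := by
        simp [A]
      have hrec' := hrec (n + 1) h2 (t (n + 1)) (ht (n + 1))
      rw [hA', ih] at hrec'
      have hne : ENNReal.ofReal (Real.exp (-l * S t n)) ≠ 0 := by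
        simp [ENNReal.ofReal_eq_zero, not_le, Real.exp_pos]
      have hnt : ENNReal.ofReal (Real.exp (-l * S t n)) ≠ ⊤ := ENNReal.ofReal_ne_top
      have heq := (ENNReal.eq_div_iff hne hnt).mp hrec'.symm
      rw [← heq, ← ENNReal.ofReal_mul (Real.exp_nonneg _), ← Real.exp_add]
      ring_nf

/-- Conditional survival of the next fragment over the survival event. -/
lemma key (ht : ∀ m, 0 ≤ t m)
    (h1 : ∀ u : ℝ, 0 ≤ u → P {ω | u < τ 1 ω} = ENNReal.ofReal (Real.exp (-l * u)))
    (hrec : ∀ m, 2 ≤ m → ∀ u : ℝ, 0 ≤ u →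
      P ({ω | u < τ m ω} ∩ ⋂ j ∈ Finset.Icc 1 (m - 1), {ω | t j < τ j ω})
          / P (⋂ j ∈ Finset.Icc 1 (m - 1), {ω | t j < τ j ω})
        = ENNReal.ofReal (Real.exp (-l * u))) :
    ∀ m, ∀ v : ℝ, 0 ≤ v →
      P ({ω | v < τ (m + 1) ω} ∩ A t τ m)
        = ENNReal.ofReal (Real.exp (-l * (v + S t m))) := by
  intro m v hv
  rcases Nat.eq_zero_or_pos m with hm | hm
  · subst hm
    rw [A_zero, Set.inter_univ, h1 v hv, S_zero]
    norm_num
  · have h2 : 2 ≤ m + 1 := by omega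
    have hA' : (⋂ j ∈ Finset.Icc 1 (m + 1 - 1), {ω | t j < τ j ω}) = A t τ m := by
      simp [A]
    have hpa := PA P l t τ ht h1 hrec m
    have hrec' := hrec (m + 1) h2 v hv
    rw [hA', hpa] at hrec'
    have hne : ENNReal.ofReal (Real.exp (-l * S t m)) ≠ 0 := by
      simp [ENNReal.ofReal_eq_zero, not_le, Real.exp_pos]
    have hnt : ENNReal.ofReal (Real.exp (-l * S t m)) ≠ ⊤ := ENNReal.ofReal_ne_top
    have heq := (ENNReal.eq_div_iff hne hnt).mp hrec'.symm
    rw [← heq, ← ENNReal.ofReal_mul (Real.exp_nonneg _), ← Real.exp_add]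
    ring_nf

/-- Version of `key` for an arbitrary real threshold. -/
lemma keyA (ht : ∀ m, 0 ≤ t m) (hτnonneg : ∀ m ω, 0 ≤ τ m ω)
    (h1 : ∀ u : ℝ, 0 ≤ u → P {ω | u < τ 1 ω} = ENNReal.ofReal (Real.exp (-l * u)))
    (hrec : ∀ m, 2 ≤ m → ∀ u : ℝ, 0 ≤ u →
      P ({ω | u < τ m ω} ∩ ⋂ j ∈ Finset.Icc 1 (m - 1), {ω | t j < τ j ω})
          / P (⋂ j ∈ Finset.Icc 1 (m - 1), {ω | t j < τ j ω})
        = ENNReal.ofReal (Real.exp (-l * u))) :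
    ∀ m, ∀ v : ℝ,
      P ({ω | v < τ (m + 1) ω} ∩ A t τ m)
        = ENNReal.ofReal (Real.exp (-l * (max v 0 + S t m))) := by
  intro m v
  rcases le_or_gt 0 v with hv | hv
  · rw [max_eq_left hv]; exact key P l t τ ht h1 hrec m v hv
  · have hset : {ω | v < τ (m + 1) ω} = Set.univ := by
      ext ω; simp only [Set.mem_setOf_eq, Set.mem_univ, iff_true]
      exact lt_of_lt_of_le hv (hτnonneg (m + 1) ω)
    rw [hset, Set.univ_inter, PA P l t τ ht h1 hrec m, max_eq_right hv.le]
    norm_num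

end Main

end ParallelStepAux

open ParallelStepAux in
/-- Proposition 5.3, continuous time. If the fragment escape times
`τ_m` satisfy `P(τ_1 > t) = exp(-l t)` and the conditional survival identity
`P(τ_m > t ∣ τ_1 > t_1, …, τ_{m-1} > t_{m-1}) = exp(-l t)`, and `∑ t_m = ∞`, then
`L = inf {m ≥ 1 : τ_m ≤ t_m}` is finite almost surely and the accumulated time
`s_{L-1} + τ_L` is exponentially distributed with rate `l`. -/
theorem parallel_step_escape_time_exponential
    {Ω : Type*} [MeasurableSpace Ω] (P : Measure Ω) [IsProbabilityMeasure P]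
    (l : ℝ) (hl : 0 < l)
    (t : ℕ → ℝ) (ht : ∀ m, 0 ≤ t m)
    (hdiv : Filter.Tendsto (fun M => ∑ i ∈ Finset.Icc 1 M, t i)
      Filter.atTop Filter.atTop)
    (τ : ℕ → Ω → ℝ) (hτmeas : ∀ m, Measurable (τ m)) (hτnonneg : ∀ m ω, 0 ≤ τ m ω)
    (h1 : ∀ u : ℝ, 0 ≤ u → P {ω | u < τ 1 ω} = ENNReal.ofReal (Real.exp (-l * u)))
    (hrec : ∀ m, 2 ≤ m → ∀ u : ℝ, 0 ≤ u →
      P ({ω | u < τ m ω} ∩ ⋂ j ∈ Finset.Icc 1 (m - 1), {ω | t j < τ j ω})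
          / P (⋂ j ∈ Finset.Icc 1 (m - 1), {ω | t j < τ j ω})
        = ENNReal.ofReal (Real.exp (-l * u)))
    (L : Ω → ℕ) (hL : ∀ ω, L ω = sInf {m | 1 ≤ m ∧ τ m ω ≤ t m}) :
    P {ω | ∃ m, 1 ≤ m ∧ τ m ω ≤ t m} = 1 ∧
    ∀ u : ℝ, 0 ≤ u →
      P {ω | u < (∑ i ∈ Finset.Icc 1 (L ω - 1), t i) + τ (L ω) ω}
        = ENNReal.ofReal (Real.exp (-l * u)) := by
  classical
  have hτset : ∀ m (c : ℝ), MeasurableSet {ω | c < τ m ω} := fun m c =>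
    measurableSet_lt measurable_const (hτmeas m)
  have hdivS : Filter.Tendsto (S t) Filter.atTop Filter.atTop := hdiv
  -- the probability of surviving all fragments is zero
  have hIcap : P (⋂ m, A t τ m) = 0 := by
    have htend := tendsto_measure_iInter_atTop (μ := P) (s := A t τ)
      (fun n => (A_meas hτmeas n).nullMeasurableSet) (A_anti t τ)
      ⟨0, measure_ne_top P _⟩
    have h0 : Filter.Tendsto (fun m => -l * S t m) Filter.atTop Filter.atBot := by
      have hp : Filter.Tendsto (fun m => l * S t m) Filter.atTop Filter.atTop :=
        hdivS.const_mul_atTop hl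
      have hn := Filter.tendsto_neg_atTop_atBot.comp hp
      simpa [Function.comp_def, neg_mul] using hn
    have h2' : Filter.Tendsto (fun m => Real.exp (-l * S t m)) Filter.atTop (nhds 0) :=
      Real.tendsto_exp_atBot.comp h0
    have h3' := ENNReal.tendsto_ofReal h2'
    rw [ENNReal.ofReal_zero] at h3'
    have htend2 : Filter.Tendsto (P ∘ A t τ) Filter.atTop (nhds 0) :=
      h3'.congr fun m => (PA P l t τ ht h1 hrec m).symm
    exact tendsto_nhds_unique htend htend2
  -- part one
  have hEmeas : MeasurableSet {ω | ∃ m, 1 ≤ m ∧ τ m ω ≤ t m} := by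
    have hrw : {ω : Ω | ∃ m, 1 ≤ m ∧ τ m ω ≤ t m}
        = ⋃ m, {ω | 1 ≤ m ∧ τ m ω ≤ t m} := by
      ext ω; simp
    rw [hrw]
    refine MeasurableSet.iUnion fun m => ?_
    by_cases h : 1 ≤ m
    · simp only [h, true_and]
      exact measurableSet_le (hτmeas m) measurable_const
    · simp [h]
  have hEc : {ω : Ω | ∃ m, 1 ≤ m ∧ τ m ω ≤ t m}ᶜ = ⋂ m, A t τ m := by
    ext ω
    simp only [Set.mem_compl_iff, Set.mem_setOf_eq, not_exists, not_and, not_le,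
      Set.mem_iInter]
    constructor
    · intro h m
      exact A_mem.2 fun j hj1 _ => h j hj1
    · intro h m hm
      exact A_mem.1 (h m) m hm le_rfl
  have hPEc : P ({ω : Ω | ∃ m, 1 ≤ m ∧ τ m ω ≤ t m}ᶜ) = 0 := by rw [hEc]; exact hIcap
  have hPart1 : P {ω | ∃ m, 1 ≤ m ∧ τ m ω ≤ t m} = 1 :=
    (prob_compl_eq_zero_iff hEmeas).mp hPEc
  refine ⟨hPart1, fun u hu => ?_⟩
  -- characterization of the event {L = m+1}
  have hLiff : ∀ (ω : Ω) m, L ω = m + 1 ↔ (ω ∈ A t τ m ∧ τ (m + 1) ω ≤ t (m + 1)) := by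
    intro ω m
    rw [hL ω]
    constructor
    · intro h
      have hne : {k | 1 ≤ k ∧ τ k ω ≤ t k}.Nonempty := by
        by_contra hc
        rw [Set.not_nonempty_iff_eq_empty] at hc
        rw [hc, Nat.sInf_empty] at h
        omega
      have hmem := Nat.sInf_mem hne
      rw [h] at hmem
      refine ⟨A_mem.2 fun j hj1 hj2 => ?_, hmem.2⟩
      have hjlt : j < sInf {k | 1 ≤ k ∧ τ k ω ≤ t k} := by rw [h]; omega
      have hnot := Nat.notMem_of_lt_sInf hjlt
      simp only [Set.mem_setOf_eq, not_and, not_le] at hnot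
      exact hnot hj1
    · rintro ⟨hA, hle⟩
      have hmem : m + 1 ∈ {k | 1 ≤ k ∧ τ k ω ≤ t k} := ⟨by omega, hle⟩
      refine le_antisymm (Nat.sInf_le hmem) ?_
      by_contra hc
      push_neg at hc
      have h2 := Nat.sInf_mem ⟨m + 1, hmem⟩
      have h3 := A_mem.1 hA (sInf {k | 1 ≤ k ∧ τ k ω ≤ t k}) h2.1 (by omega)
      exact absurd h2.2 (not_le.2 h3)
  set g : ℕ → ℝ := fun m => Real.exp (-l * max u (S t m)) with hg
  set T : Set Ω := {ω | u < (∑ i ∈ Finset.Icc 1 (L ω - 1), t i) + τ (L ω) ω} with hT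
  -- the slice identity
  have hTD : ∀ m, T ∩ {ω | L ω = m + 1}
      = ({ω | u - S t m < τ (m + 1) ω} ∩ A t τ m)
        \ ({ω | t (m + 1) < τ (m + 1) ω} ∩ A t τ m) := by
    intro m
    ext ω
    simp only [hT, Set.mem_inter_iff, Set.mem_setOf_eq, Set.mem_diff]
    constructor
    · rintro ⟨hTm, hLm⟩
      obtain ⟨hAω, hτle⟩ := (hLiff ω m).1 hLm
      rw [hLm, Nat.add_sub_cancel] at hTm
      have hsum : (∑ i ∈ Finset.Icc 1 m, t i) = S t m := rfl
      rw [hsum] at hTm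
      refine ⟨⟨by linarith, hAω⟩, fun h => absurd hτle (not_le.2 h.1)⟩
    · rintro ⟨⟨hv, hA⟩, hnc⟩
      have hτle : τ (m + 1) ω ≤ t (m + 1) := by
        by_contra hgt
        push_neg at hgt
        exact hnc ⟨hgt, hA⟩
      have hLm := (hLiff ω m).2 ⟨hA, hτle⟩
      refine ⟨?_, hLm⟩
      rw [hLm, Nat.add_sub_cancel]
      have hsum : (∑ i ∈ Finset.Icc 1 m, t i) = S t m := rfl
      rw [hsum]
      linarith
  -- measure of the slices
  have hPD : ∀ m, P (T ∩ {ω | L ω = m + 1}) = ENNReal.ofReal (g m - g (m + 1)) := by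
    intro m
    rw [hTD m]
    rcases le_or_gt (u - S t m) (t (m + 1)) with hvt | hvt
    · have hsub : ({ω | t (m + 1) < τ (m + 1) ω} ∩ A t τ m)
          ⊆ ({ω | u - S t m < τ (m + 1) ω} ∩ A t τ m) :=
        Set.inter_subset_inter_left _ (fun ω h => lt_of_le_of_lt hvt h)
      rw [measure_diff hsub (((hτset _ _).inter (A_meas hτmeas m)).nullMeasurableSet)
        (measure_ne_top P _)]
      rw [keyA P l t τ ht hτnonneg h1 hrec m (u - S t m),
        key P l t τ ht h1 hrec m (t (m + 1)) (ht (m + 1))]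
      rw [← ENNReal.ofReal_sub _ (Real.exp_nonneg _)]
      congr 1
      have h1' : max (u - S t m) 0 + S t m = max u (S t m) := by
        rcases le_total u (S t m) with h | h
        · rw [max_eq_right (by linarith), max_eq_right h]; ring
        · rw [max_eq_left (by linarith), max_eq_left h]; ring
      have h2' : t (m + 1) + S t m = max u (S t (m + 1)) := by
        rw [max_eq_right (by rw [S_succ]; linarith), S_succ]; ring
      simp only [hg]
      rw [h1', h2']
    · have hempty : ({ω | u - S t m < τ (m + 1) ω} ∩ A t τ m)
          \ ({ω | t (m + 1) < τ (m + 1) ω} ∩ A t τ m) = ∅ := by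
        rw [Set.eq_empty_iff_forall_notMem]
        intro ω hω
        obtain ⟨⟨hv, hA⟩, hnc⟩ := hω
        simp only [Set.mem_setOf_eq] at hv
        exact hnc ⟨by simp only [Set.mem_setOf_eq]; linarith, hA⟩
      rw [hempty, measure_empty]
      have hu1 : max u (S t m) = u := max_eq_left (by linarith [ht (m + 1)])
      have hu2 : max u (S t (m + 1)) = u := max_eq_left (by rw [S_succ]; linarith)
      simp only [hg]
      rw [hu1, hu2, sub_self, ENNReal.ofReal_zero]
  -- decomposition of the event
  have hEU : {ω : Ω | ∃ m, 1 ≤ m ∧ τ m ω ≤ t m} = ⋃ m, {ω | L ω = m + 1} := by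
    ext ω
    simp only [Set.mem_setOf_eq, Set.mem_iUnion]
    constructor
    · intro h
      have hne : {k | 1 ≤ k ∧ τ k ω ≤ t k}.Nonempty := by
        obtain ⟨m, hm⟩ := h; exact ⟨m, hm⟩
      have hmem := Nat.sInf_mem hne
      have h1' : 1 ≤ L ω := by rw [hL ω]; exact hmem.1
      exact ⟨L ω - 1, by omega⟩
    · rintro ⟨m, hm⟩
      obtain ⟨_, hτle⟩ := (hLiff ω m).1 hm
      exact ⟨m + 1, by omega, hτle⟩
  have hPT : P T = ∑' m, P (T ∩ {ω | L ω = m + 1}) := by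
    have hsplit := measure_inter_add_diff (μ := P) T hEmeas
    have hdiff : P (T \ {ω : Ω | ∃ m, 1 ≤ m ∧ τ m ω ≤ t m}) = 0 :=
      measure_mono_null (fun ω hω => hω.2) hPEc
    have h0 : P T = P (T ∩ {ω : Ω | ∃ m, 1 ≤ m ∧ τ m ω ≤ t m}) := by
      rw [← hsplit, hdiff, add_zero]
    rw [h0, hEU, Set.inter_iUnion]
    refine measure_iUnion ?_ ?_
    · intro i j hij
      rw [Function.onFun, Set.disjoint_left]
      rintro ω ⟨_, hi⟩ ⟨_, hj⟩
      simp only [Set.mem_setOf_eq] at hi hj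
      omega
    · intro m
      rw [hTD m]
      exact ((hτset _ _).inter (A_meas hτmeas m)).diff
        ((hτset _ _).inter (A_meas hτmeas m))
  rw [hPT]
  simp only [hPD]
  -- telescoping sum
  have hganti : Antitone g := by
    apply antitone_nat_of_succ_le
    intro n
    simp only [hg]
    apply Real.exp_le_exp.2
    have hmax : max u (S t n) ≤ max u (S t (n + 1)) :=
      max_le_max le_rfl (S_mono ht (Nat.le_succ n))
    have h2 := mul_le_mul_of_nonneg_left hmax hl.le
    linarith
  have hpart : ∀ N, ∑ m ∈ Finset.range N, ENNReal.ofReal (g m - g (m + 1))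
      = ENNReal.ofReal (g 0 - g N) := by
    intro N
    induction N with
    | zero => simp
    | succ n ihn =>
      rw [Finset.sum_range_succ, ihn,
        ← ENNReal.ofReal_add (sub_nonneg.2 (hganti (Nat.zero_le n)))
          (sub_nonneg.2 (hganti (Nat.le_succ n)))]
      congr 1
      ring
  have hgto : Filter.Tendsto g Filter.atTop (nhds 0) := by
    have hmax : Filter.Tendsto (fun m => max u (S t m)) Filter.atTop Filter.atTop :=
      Filter.tendsto_atTop_mono (fun m => le_max_right u (S t m)) hdivS
    have h0 : Filter.Tendsto (fun m => -l * max u (S t m)) Filter.atTop Filter.atBot := by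
      have hp : Filter.Tendsto (fun m => l * max u (S t m)) Filter.atTop Filter.atTop :=
        hmax.const_mul_atTop hl
      have hn := Filter.tendsto_neg_atTop_atBot.comp hp
      simpa [Function.comp_def, neg_mul] using hn
    simpa only [hg, Function.comp_def] using Real.tendsto_exp_atBot.comp h0
  have hlim1 : Filter.Tendsto (fun N => ∑ m ∈ Finset.range N,
      ENNReal.ofReal (g m - g (m + 1))) Filter.atTop (nhds (ENNReal.ofReal (g 0))) := by
    have hten : Filter.Tendsto (fun N => ENNReal.ofReal (g 0 - g N)) Filter.atTop
        (nhds (ENNReal.ofReal (g 0 - 0))) :=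
      ENNReal.tendsto_ofReal (tendsto_const_nhds.sub hgto)
    rw [sub_zero] at hten
    exact hten.congr fun N => (hpart N).symm
  have hfin := tendsto_nhds_unique (ENNReal.tendsto_nat_tsum _) hlim1
  rw [hfin]
  congr 1
  simp only [hg]
  rw [S_zero, max_eq_left hu]
end

section
/- Let (Ω, ℙ) be a probability space and p ∈ (0,1). Let (t_m)_{m≥1} be positive integers with ∑_{m≥1} t_m = ∞, and set s_0 = 0 and s_m = t_1 + … + t_m. Let (τ_m)_{m≥1} be positive-integer-valued random variables such that ℙ(τ_1 > n) = (1−p)ⁿ for all n ∈ ℕ and, for every m ≥ 2 and every n ∈ ℕ, the conditional probability ℙ(τ_m > n ∣ τ_1 > t_1, …, τ_{m−1} > t_{m−1}) = (1−p)ⁿ. Define L = inf{m ≥ 1 : τ_m ≤ t_m}. Then L is finite almost surely and ℙ(s_{L−1} + τ_L > n) = (1−p)ⁿ for all n ∈ ℕ, i.e. s_{L−1} + τ_L is geometrically distributed with parameter p. -/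
/-!
Write `s_m` for the cumulative fragment length and `B_m` for the event that the first `m`
fragments survive (`τ_j > t_j` for `j ≤ m`). The conditional survival identity is the product
rule `P(τ_{m+1} > r, B_m) = (1-p)^r P(B_m)`, so by induction `P(B_m) = (1-p)^{s_m}` and
`P(τ_{m+1} > r, B_m) = (1-p)^{s_m + r}`. As `s_m → ∞`, `P(B_m) → 0`, hence some fragment
escapes almost surely. Given `n`, pick `K` with `s_K ≤ n < s_{K+1}`: on the escape event,
`s_{L-1} + τ_L > n` holds exactly when `B_K` holds and `τ_{K+1} > n - s_K`, an event of
probability `(1-p)^{s_K + (n - s_K)} = (1-p)^n`.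
-/

open MeasureTheory Filter Set

namespace ParallelReplica

section Pointwise

variable (t τ : ℕ → ℕ)

def cumulativeTime (m : ℕ) : ℕ := ∑ i ∈ Finset.Icc 1 m, t i

noncomputable def firstEscape : ℕ := sInf {m | 1 ≤ m ∧ τ m ≤ t m}

lemma cumulativeTime_zero : cumulativeTime t 0 = 0 := by
  simp [cumulativeTime]

lemma cumulativeTime_succ (m : ℕ) :
    cumulativeTime t (m + 1) = cumulativeTime t m + t (m + 1) :=
  Finset.sum_Icc_succ_top (by omega) t

lemma cumulativeTime_mono : Monotone (cumulativeTime t) := fun _ _ h =>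
  Finset.sum_le_sum_of_subset (Finset.Icc_subset_Icc_right h)

lemma exists_cumulativeTime_le_lt (hdiv : Tendsto (cumulativeTime t) atTop atTop) (n : ℕ) :
    ∃ K, cumulativeTime t K ≤ n ∧ n < cumulativeTime t (K + 1) := by
  have hex : ∃ m, n < cumulativeTime t m := (hdiv.eventually_gt_atTop n).exists
  have hpos : Nat.find hex ≠ 0 := fun h => by
    simpa [h, cumulativeTime_zero] using Nat.find_spec hex
  refine ⟨Nat.find hex - 1, not_lt.1 (Nat.find_min hex (by omega)), ?_⟩
  simpa [Nat.sub_add_cancel (Nat.one_le_iff_ne_zero.2 hpos)] using Nat.find_spec hex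

variable {t τ}

lemma firstEscape_spec (h : ∃ m, 1 ≤ m ∧ τ m ≤ t m) :
    1 ≤ firstEscape t τ ∧ τ (firstEscape t τ) ≤ t (firstEscape t τ) :=
  Nat.sInf_mem h

lemma lt_firstEscape_iff (h : ∃ m, 1 ≤ m ∧ τ m ≤ t m) (K : ℕ) :
    K < firstEscape t τ ↔ ∀ j ∈ Finset.Icc 1 K, t j < τ j := by
  constructor
  · intro hK j hj
    obtain ⟨hj1, hjK⟩ := Finset.mem_Icc.1 hj
    by_contra! hτj
    have hLj : firstEscape t τ ≤ j := Nat.sInf_le ⟨hj1, hτj⟩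
    omega
  · intro hsurv
    by_contra! hK
    obtain ⟨hL1, hLt⟩ := firstEscape_spec h
    exact (hsurv _ (Finset.mem_Icc.2 ⟨hL1, hK⟩)).not_ge hLt

lemma lt_escapeTime_iff (h : ∃ m, 1 ≤ m ∧ τ m ≤ t m) {K n : ℕ}
    (hKn : cumulativeTime t K ≤ n) (hnK : n < cumulativeTime t (K + 1)) :
    n < cumulativeTime t (firstEscape t τ - 1) + τ (firstEscape t τ) ↔
      n - cumulativeTime t K < τ (K + 1) ∧ K < firstEscape t τ := by
  obtain ⟨hL1, hLt⟩ := firstEscape_spec h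
  have hsurv : K + 1 < firstEscape t τ → t (K + 1) < τ (K + 1) := fun hK =>
    (lt_firstEscape_iff h _).1 hK _ (by simp)
  generalize firstEscape t τ = L at *
  obtain ⟨l, rfl⟩ : ∃ l, L = l + 1 := ⟨L - 1, by omega⟩
  have hsuccK := cumulativeTime_succ t K
  rw [Nat.add_sub_cancel]
  rcases lt_trichotomy l K with hlK | rfl | hKl
  · have hle := cumulativeTime_mono t (show l + 1 ≤ K by omega)
    have := cumulativeTime_succ t l
    exact iff_of_false (by omega) (by omega)
  · omega
  · have hle := cumulativeTime_mono t (show K + 1 ≤ l by omega)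
    exact iff_of_true (by omega) ⟨by have := hsurv (by omega); omega, by omega⟩

end Pointwise

section Survival

variable {Ω : Type*} {t : ℕ → ℕ} {τ : ℕ → Ω → ℕ}

def survivalSet (t : ℕ → ℕ) (τ : ℕ → Ω → ℕ) (m : ℕ) : Set Ω :=
  ⋂ j ∈ Finset.Icc 1 m, {ω | t j < τ j ω}

lemma mem_survivalSet {m : ℕ} {ω : Ω} :
    ω ∈ survivalSet t τ m ↔ ∀ j ∈ Finset.Icc 1 m, t j < τ j ω := by
  simp [survivalSet]

lemma survivalSet_zero : survivalSet t τ 0 = (univ : Set Ω) := by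
  simp [survivalSet]

lemma survivalSet_succ (m : ℕ) :
    survivalSet t τ (m + 1) = {ω | t (m + 1) < τ (m + 1) ω} ∩ survivalSet t τ m := by
  rw [survivalSet, ← Finset.insert_Icc_right_eq_Icc_add_one (by omega), Finset.set_biInter_insert]
  rfl

variable [MeasurableSpace Ω] {μ : Measure Ω} {q : ℝ}
  (hcond : ∀ m n : ℕ, μ ({ω | n < τ (m + 1) ω} ∩ survivalSet t τ m) /
    μ (survivalSet t τ m) = ENNReal.ofReal (q ^ n))
include hcond

lemma measure_lt_inter_survivalSet_eq_mul [IsFiniteMeasure μ] {m : ℕ}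
    (hm : μ (survivalSet t τ m) ≠ 0) (n : ℕ) :
    μ ({ω | n < τ (m + 1) ω} ∩ survivalSet t τ m) =
      ENNReal.ofReal (q ^ n) * μ (survivalSet t τ m) := by
  rw [← hcond m n, ENNReal.div_mul_cancel hm (measure_ne_top μ _)]

lemma measure_survivalSet [IsProbabilityMeasure μ] (hq : 0 < q) (m : ℕ) :
    μ (survivalSet t τ m) = ENNReal.ofReal (q ^ cumulativeTime t m) := by
  induction m with
  | zero => simp [survivalSet_zero, cumulativeTime_zero]
  | succ m ih =>
    have hm : μ (survivalSet t τ m) ≠ 0 := by rw [ih]; positivity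
    rw [survivalSet_succ, measure_lt_inter_survivalSet_eq_mul hcond hm, ih,
      ← ENNReal.ofReal_mul (by positivity), ← pow_add, cumulativeTime_succ, add_comm]

lemma measure_lt_inter_survivalSet [IsProbabilityMeasure μ] (hq : 0 < q) (m n : ℕ) :
    μ ({ω | n < τ (m + 1) ω} ∩ survivalSet t τ m) =
      ENNReal.ofReal (q ^ (n + cumulativeTime t m)) := by
  have hm := measure_survivalSet hcond hq m
  rw [measure_lt_inter_survivalSet_eq_mul hcond (by rw [hm]; positivity), hm,
    ← ENNReal.ofReal_mul (by positivity), ← pow_add]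

lemma ae_exists_escape [IsProbabilityMeasure μ] (hq0 : 0 < q) (hq1 : q < 1)
    (hdiv : Tendsto (cumulativeTime t) atTop atTop) :
    ∀ᵐ ω ∂μ, ∃ m, 1 ≤ m ∧ τ m ω ≤ t m := by
  have hsub : ∀ m, {ω | ¬∃ m, 1 ≤ m ∧ τ m ω ≤ t m} ⊆ survivalSet t τ m := by
    intro m ω hω
    simp only [mem_ofPred_eq, not_exists, not_and, not_le] at hω
    exact mem_survivalSet.2 fun j hj => hω j (Finset.mem_Icc.1 hj).1
  have hlim : Tendsto (fun m => ENNReal.ofReal (q ^ cumulativeTime t m)) atTop (nhds 0) := by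
    simpa using ENNReal.tendsto_ofReal
      ((tendsto_pow_atTop_nhds_zero_of_lt_one hq0.le hq1).comp hdiv)
  refine ae_iff.2 (le_antisymm (ge_of_tendsto' hlim fun m => ?_) zero_le)
  exact (measure_mono (hsub m)).trans_eq (measure_survivalSet hcond hq0 m)

end Survival

end ParallelReplica

open ParallelReplica

theorem parallel_step_escape_time_geometric_general
    {Ω : Type*} [MeasurableSpace Ω] (P : Measure Ω) [IsProbabilityMeasure P]
    (p : ℝ) (hp0 : 0 < p) (hp1 : p < 1)
    (t : ℕ → ℕ)
    (hdiv : Filter.Tendsto (fun M => ∑ i ∈ Finset.Icc 1 M, t i)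
      Filter.atTop Filter.atTop)
    (τ : ℕ → Ω → ℕ)
    (h1 : ∀ n : ℕ, P {ω | n < τ 1 ω} = ENNReal.ofReal ((1 - p) ^ n))
    (hrec : ∀ m, 2 ≤ m → ∀ n : ℕ,
      P ({ω | n < τ m ω} ∩ ⋂ j ∈ Finset.Icc 1 (m - 1), {ω | t j < τ j ω})
          / P (⋂ j ∈ Finset.Icc 1 (m - 1), {ω | t j < τ j ω})
        = ENNReal.ofReal ((1 - p) ^ n))
    (L : Ω → ℕ) (hL : ∀ ω, L ω = sInf {m | 1 ≤ m ∧ τ m ω ≤ t m}) :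
    P {ω | ∃ m, 1 ≤ m ∧ τ m ω ≤ t m} = 1 ∧
    ∀ n : ℕ, P {ω | n < (∑ i ∈ Finset.Icc 1 (L ω - 1), t i) + τ (L ω) ω}
        = ENNReal.ofReal ((1 - p) ^ n) := by
  obtain rfl : L = fun ω => firstEscape t (τ · ω) := funext hL
  have hq0 : 0 < 1 - p := by linarith
  have hcond : ∀ m n : ℕ, P ({ω | n < τ (m + 1) ω} ∩ survivalSet t τ m) /
      P (survivalSet t τ m) = ENNReal.ofReal ((1 - p) ^ n) := by
    rintro (_ | m) n
    · rw [survivalSet_zero, inter_univ, measure_univ, div_one, h1]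
    · exact hrec (m + 2) (by omega) n
  have hesc := ae_exists_escape hcond hq0 (by linarith) hdiv
  refine ⟨(measure_congr (ae_eq_univ.2 (ae_iff.1 hesc))).trans measure_univ, fun n => ?_⟩
  obtain ⟨K, hKn, hnK⟩ := exists_cumulativeTime_le_lt t hdiv n
  calc _ = P ({ω | n - cumulativeTime t K < τ (K + 1) ω} ∩ survivalSet t τ K) := by
        refine measure_congr (eventuallyEq_set.2 (hesc.mono fun ω hω => ?_))
        rw [mem_inter_iff, mem_survivalSet, ← lt_firstEscape_iff hω]
        exact lt_escapeTime_iff hω hKn hnK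
    _ = _ := by rw [measure_lt_inter_survivalSet hcond hq0, Nat.sub_add_cancel hKn]

/-- Proposition 5.3, discrete time. If the fragment escape times
`τ_m` are positive-integer valued with `P(τ_1 > n) = (1-p)^n` and the conditional
survival identity `P(τ_m > n ∣ τ_1 > t_1, …, τ_{m-1} > t_{m-1}) = (1-p)^n`, and
`∑ t_m = ∞`, then `L = inf {m ≥ 1 : τ_m ≤ t_m}` is finite almost surely and the
accumulated time `s_{L-1} + τ_L` is geometrically distributed with parameter `p`. -/
theorem parallel_step_escape_time_geometric
    {Ω : Type*} [MeasurableSpace Ω] (P : Measure Ω) [IsProbabilityMeasure P]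
    (p : ℝ) (hp0 : 0 < p) (hp1 : p < 1)
    (t : ℕ → ℕ) (ht : ∀ m, 1 ≤ m → 1 ≤ t m)
    (hdiv : Filter.Tendsto (fun M => ∑ i ∈ Finset.Icc 1 M, t i)
      Filter.atTop Filter.atTop)
    (τ : ℕ → Ω → ℕ) (hτmeas : ∀ m, Measurable (τ m))
    (hτpos : ∀ m ω, 1 ≤ m → 1 ≤ τ m ω)
    (h1 : ∀ n : ℕ, P {ω | n < τ 1 ω} = ENNReal.ofReal ((1 - p) ^ n))
    (hrec : ∀ m, 2 ≤ m → ∀ n : ℕ,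
      P ({ω | n < τ m ω} ∩ ⋂ j ∈ Finset.Icc 1 (m - 1), {ω | t j < τ j ω})
          / P (⋂ j ∈ Finset.Icc 1 (m - 1), {ω | t j < τ j ω})
        = ENNReal.ofReal ((1 - p) ^ n))
    (L : Ω → ℕ) (hL : ∀ ω, L ω = sInf {m | 1 ≤ m ∧ τ m ω ≤ t m}) :
    P {ω | ∃ m, 1 ≤ m ∧ τ m ω ≤ t m} = 1 ∧
    ∀ n : ℕ, P {ω | n < (∑ i ∈ Finset.Icc 1 (L ω - 1), t i) + τ (L ω) ω}
        = ENNReal.ofReal ((1 - p) ^ n) :=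
  parallel_step_escape_time_geometric_general P p hp0 hp1 t hdiv τ h1 hrec L hL
end

section
/- Fix an integer R ≥ 1. Let t : {1,…,R} × ℕ → ℝ be such that for each r, the map n ↦ t(r,n) is monotone nondecreasing, and let e : ℕ → {1,…,R} × ℕ, e(k) = (r_k, m_k), be a bijection such that k ↦ t(r_k, m_k) is strictly increasing. Then m_0 = 0, and for every k ∈ ℕ the set {m_j : j < k and r_j = r_k} equals {0, 1, …, m_k − 1} (both sets being empty when m_k = 0). -/
/-!
Along the enumeration `e` the times `t (e k)` increase strictly, while along a fixed replica they
increase weakly with the fragment index. Hence within one replica the enumeration visits the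
fragments in increasing order of their index, and by surjectivity every earlier fragment of that
replica is visited at some step, necessarily an earlier one.
-/

section AsynchronousOrdering

variable {ι ρ α β : Type*} [LinearOrder ι] [LinearOrder α] [Preorder β]
  {t : ρ × α → β} {e : ι → ρ × α}

theorem strictMonoOn_snd_fiber (hmono : ∀ r, Monotone fun n => t (r, n))
    (hstrict : StrictMono fun k => t (e k)) (r : ρ) :
    StrictMonoOn (fun k => (e k).2) {k | (e k).1 = r} := by
  intro j (hj : (e j).1 = r) k (hk : (e k).1 = r) hjk
  by_contra hle
  have hkj : t (e k) ≤ t (e j) := by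
    rw [← Prod.mk.eta (p := e k), ← Prod.mk.eta (p := e j), hj, hk]
    exact hmono r (not_lt.mp hle)
  exact (hstrict hjk).not_ge hkj

theorem setOf_snd_of_lt_of_fst_eq_eq_Iio (hmono : ∀ r, Monotone fun n => t (r, n))
    (hsurj : Function.Surjective e) (hstrict : StrictMono fun k => t (e k)) (k : ι) :
    {n | ∃ j, j < k ∧ (e j).1 = (e k).1 ∧ (e j).2 = n} = Set.Iio (e k).2 := by
  have hfiber := strictMonoOn_snd_fiber hmono hstrict (e k).1
  have hk : k ∈ {i | (e i).1 = (e k).1} := rfl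
  ext n
  constructor
  · rintro ⟨j, hjk, hj, rfl⟩
    exact hfiber hj hk hjk
  · intro hn
    obtain ⟨j, hj⟩ := hsurj ((e k).1, n)
    have hjfiber : j ∈ {i | (e i).1 = (e k).1} := by simp [hj]
    have hjk : j < k := (hfiber.lt_iff_lt hjfiber hk).mp (by simpa [hj] using hn)
    exact ⟨j, hjk, hjfiber, by simp [hj]⟩

end AsynchronousOrdering

theorem asynchronous_ordering_identity_general
    (R : ℕ) (t : Fin R × ℕ → ℝ)
    (hmono : ∀ r : Fin R, Monotone fun n => t (r, n))
    (e : ℕ → Fin R × ℕ) (hbij : Function.Bijective e)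
    (hstrict : StrictMono fun k => t (e k)) :
    (e 0).2 = 0 ∧
    ∀ k : ℕ, {n : ℕ | ∃ j, j < k ∧ (e j).1 = (e k).1 ∧ (e j).2 = n}
      = Set.Iio (e k).2 := by
  have key := setOf_snd_of_lt_of_fst_eq_eq_Iio hmono hbij.surjective hstrict
  refine ⟨?_, key⟩
  have hempty : Set.Iio (e 0).2 = ∅ := by
    rw [← key 0]
    simp
  simpa using hempty

/-- combinatorial heart of Proposition 4.2, asynchronous computing.
If `t (r, n)` is the wall-clock time at which replica `r` finishes its `n`-th fragment,
monotone in `n` for each `r`, and `e k = (r_k, m_k)` is a bijective enumeration along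
which the wall-clock times are strictly increasing, then `m_0 = 0` and, for each `k`,
`{m_j : j < k, r_j = r_k} = {0, 1, …, m_k - 1}`. -/
theorem asynchronous_ordering_identity
    (R : ℕ) (hR : 1 ≤ R) (t : Fin R × ℕ → ℝ)
    (hmono : ∀ r : Fin R, Monotone fun n => t (r, n))
    (e : ℕ → Fin R × ℕ) (hbij : Function.Bijective e)
    (hstrict : StrictMono fun k => t (e k)) :
    (e 0).2 = 0 ∧
    ∀ k : ℕ, {n : ℕ | ∃ j, j < k ∧ (e j).1 = (e k).1 ∧ (e j).2 = n}
      = Set.Iio (e k).2 :=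
  asynchronous_ordering_identity_general R t hmono e hbij hstrict
end

section
/- Let N be a positive integer and a : ℤ/Nℤ → ℝ with ∑_{k ∈ ℤ/Nℤ} a(k) = 0. Then for every k ∈ ℤ/Nℤ, a(k) + max_{0 ≤ ℓ ≤ N−1} ∑_{j=0}^{ℓ} a(k+1+j) = max_{0 ≤ ℓ ≤ N−1} ∑_{j=0}^{ℓ} a(k+j), where all index arithmetic is performed in ℤ/Nℤ and each maximum is over ℓ ∈ {0, 1, …, N−1}. -/
lemma sum_range_zmod (N : ℕ) [NeZero N] (f : ZMod N → ℝ) :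
    ∑ j ∈ Finset.range N, f (j : ZMod N) = ∑ x : ZMod N, f x := by
  refine Finset.sum_nbij' (i := fun j => (j : ZMod N)) (j := fun x => x.val)
    (fun j hj => Finset.mem_univ _)
    (fun x _ => Finset.mem_range.mpr (ZMod.val_lt x))
    (fun j hj => ZMod.val_cast_of_lt (Finset.mem_range.mp hj))
    (fun x _ => ZMod.natCast_rightInverse x)
    (fun j hj => rfl)

/-- Key algebraic identity behind the invariance of `e^{-βV}` for the
lifted Metropolis PDMP: if `a : ℤ/Nℤ → ℝ` sums to zero around the cycle, then
`a k + max_{0 ≤ ℓ ≤ N-1} ∑_{j=0}^{ℓ} a (k+1+j) = max_{0 ≤ ℓ ≤ N-1} ∑_{j=0}^{ℓ} a (k+j)`. -/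
theorem cyclic_max_partial_sum_identity
    (N : ℕ) [NeZero N] (a : ZMod N → ℝ)
    (ha : ∑ k : ZMod N, a k = 0) (k : ZMod N) :
    a k + (Finset.range N).sup' (Finset.nonempty_range_iff.mpr (NeZero.ne N))
        (fun ℓ => ∑ j ∈ Finset.range (ℓ + 1), a (k + 1 + (j : ZMod N)))
      = (Finset.range N).sup' (Finset.nonempty_range_iff.mpr (NeZero.ne N))
        (fun ℓ => ∑ j ∈ Finset.range (ℓ + 1), a (k + (j : ZMod N))) := by
  have hN : 0 < N := Nat.pos_of_ne_zero (NeZero.ne N)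
  set H := Finset.nonempty_range_iff.mpr (NeZero.ne N)
  set S : ℕ → ℝ := fun ℓ => ∑ j ∈ Finset.range (ℓ + 1), a (k + (j : ZMod N)) with hS
  -- the shifted partial sums
  have hstep : ∀ ℓ : ℕ, a k + ∑ j ∈ Finset.range (ℓ + 1), a (k + 1 + (j : ZMod N))
      = S (ℓ + 1) := by
    intro ℓ
    have := Finset.sum_range_succ' (fun j : ℕ => a (k + (j : ZMod N))) (ℓ + 1)
    simp only [hS, this, Nat.cast_zero, add_zero, Nat.cast_add, Nat.cast_one]
    have : ∀ j : ℕ, a (k + ((j : ZMod N) + 1)) = a (k + 1 + (j : ZMod N)) := by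
      intro j; ring_nf
    simp only [this]
    ring
  -- wrap-around: S N = S 0
  have hwrap : S N = S 0 := by
    have h2 : ∑ j ∈ Finset.range N, a (k + (j : ZMod N)) = 0 := by
      rw [sum_range_zmod N (fun x => a (k + x))]
      simpa using (Equiv.sum_comp (Equiv.addLeft k) a).trans ha
    have h3 : (N : ZMod N) = 0 := ZMod.natCast_self N
    simp only [hS, Finset.sum_range_succ, Finset.sum_range_zero, h2, h3, zero_add,
      add_zero, Nat.cast_zero]
  -- distribute the addition over the sup
  have hdist : a k + Finset.sup' (Finset.range N) H
        (fun ℓ => ∑ j ∈ Finset.range (ℓ + 1), a (k + 1 + (j : ZMod N)))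
      = Finset.sup' (Finset.range N) H (fun ℓ => S (ℓ + 1)) := by
    rw [Finset.comp_sup'_eq_sup'_comp H (fun x => a k + x) (fun x y => by
      rcases le_total x y with h | h
      · rw [max_eq_right h, max_eq_right (by linarith)]
      · rw [max_eq_left h, max_eq_left (by linarith)])]
    exact Finset.sup'_congr H rfl (fun ℓ _ => hstep ℓ)
  rw [hdist]
  -- now show sup over S(1..N) = sup over S(0..N-1)
  apply le_antisymm
  · apply Finset.sup'_le
    intro ℓ hℓ
    rcases lt_or_eq_of_le (Nat.succ_le_of_lt (Finset.mem_range.mp hℓ)) with h | h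
    · exact Finset.le_sup' (f := S) (Finset.mem_range.mpr h)
    · rw [show ℓ + 1 = N from h, hwrap]
      exact Finset.le_sup' (f := S) (Finset.mem_range.mpr hN)
  · apply Finset.sup'_le
    intro ℓ hℓ
    rcases Nat.eq_zero_or_pos ℓ with h | h
    · subst h
      rw [← hwrap]
      have h4 := Finset.le_sup' (b := N - 1) (f := fun ℓ => S (ℓ + 1))
        (Finset.mem_range.mpr (show N - 1 < N by omega))
      rwa [Nat.sub_add_cancel hN] at h4
    · obtain ⟨m, rfl⟩ := Nat.exists_eq_succ_of_ne_zero h.ne'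
      exact Finset.le_sup' (f := fun ℓ => S (ℓ + 1))
        (Finset.mem_range.mpr (by have := Finset.mem_range.mp hℓ; omega))
end

section
/- Let N be a positive integer, E a real vector space, V : E → ℝ, β ∈ ℝ, δt ∈ ℝ, and d : ℤ/Nℤ → E with ∑_{k ∈ ℤ/Nℤ} d(k) = 0. For x ∈ E and k ∈ ℤ/Nℤ define the acceptance probability A_k(x) = min_{0 ≤ ℓ ≤ N−1} exp(β V(x) − β V(x + δt·(d(k) + d(k+1) + … + d(k+ℓ)))), with index arithmetic in ℤ/Nℤ. Then for every x ∈ E and k ∈ ℤ/Nℤ, A_k(x) / A_{k+1}(x + δt·d(k)) = exp(β V(x) − β V(x + δt·d(k))). -/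
private lemma mul_inf'_aux {ι : Type*} {c : ℝ} (hc : 0 ≤ c) (s : Finset ι) (h : s.Nonempty)
    (f : ι → ℝ) : c * s.inf' h f = s.inf' h (fun i => c * f i) := by
  induction h using Finset.Nonempty.cons_induction with
  | singleton => simp
  | cons a s ha hs ih => rw [Finset.inf'_cons hs, Finset.inf'_cons hs, ← ih, mul_min_of_nonneg _ _ hc]

private lemma inf'_shift (N : ℕ) (hN : (Finset.range N).Nonempty) (w : ℕ → ℝ)
    (hw : w N = w 0) :
    (Finset.range N).inf' hN (fun ℓ => w (ℓ + 1)) = (Finset.range N).inf' hN w := by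
  have hNpos : 0 < N := Finset.nonempty_range_iff.mp hN |> Nat.pos_of_ne_zero
  apply le_antisymm
  · apply Finset.le_inf'
    intro b hb
    rcases Nat.eq_zero_or_pos b with rfl | hbpos
    · calc (Finset.range N).inf' hN (fun ℓ => w (ℓ + 1)) ≤ w ((N-1) + 1) :=
            Finset.inf'_le _ (by simp; omega)
        _ = w 0 := by rw [Nat.sub_add_cancel hNpos, hw]
    · obtain ⟨m, rfl⟩ := Nat.exists_eq_add_of_lt hbpos
      simp only [Nat.zero_add] at *
      exact Finset.inf'_le _ (by simp at hb ⊢; omega)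
  · apply Finset.le_inf'
    intro ℓ hℓ
    rcases Nat.lt_or_ge (ℓ + 1) N with h | h
    · exact Finset.inf'_le _ (by simpa using h)
    · have : ℓ + 1 = N := by simp at hℓ; omega
      rw [this, hw]
      exact Finset.inf'_le _ (by simpa using hNpos)


/-- Remark 5.8, ratio identity. With acceptance probabilities
`A_k(x) = min_{0 ≤ ℓ ≤ N-1} exp (βV(x) - βV(x + δt·(d_k + … + d_{k+ℓ})))` for cyclic
directions summing to zero, one has
`A_k(x) / A_{k+1}(x + δt·d_k) = exp (βV(x) - βV(x + δt·d_k))`. -/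
theorem acceptance_probability_ratio
    (N : ℕ) [NeZero N] {E : Type*} [AddCommGroup E] [Module ℝ E]
    (V : E → ℝ) (β δt : ℝ) (d : ZMod N → E) (hd : ∑ k : ZMod N, d k = 0)
    (A : ZMod N → E → ℝ)
    (hA : ∀ k x, A k x = (Finset.range N).inf'
      (Finset.nonempty_range_iff.mpr (NeZero.ne N))
      (fun ℓ => Real.exp (β * V x
        - β * V (x + δt • ∑ j ∈ Finset.range (ℓ + 1), d (k + (j : ZMod N))))))
    (x : E) (k : ZMod N) :
    A k x / A (k + 1) (x + δt • d k)
      = Real.exp (β * V x - β * V (x + δt • d k)) := by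
  have hne : (Finset.range N).Nonempty := Finset.nonempty_range_iff.mpr (NeZero.ne N)
  set y := x + δt • d k with hy
  set S : ℕ → E := fun ℓ => ∑ j ∈ Finset.range (ℓ + 1), d (k + (j : ZMod N)) with hS
  set w : ℕ → ℝ := fun ℓ => Real.exp (-(β * V (x + δt • S ℓ))) with hw
  -- the full cyclic sum vanishes
  have hzero : ∑ j ∈ Finset.range N, d (k + (j : ZMod N)) = 0 := by
    have hbij : Function.Bijective (fun i : Fin N => ((i : ℕ) : ZMod N)) := by
      rw [Fintype.bijective_iff_injective_and_card]
      refine ⟨fun i j hij => ?_, by simp [ZMod.card]⟩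
      have := congrArg ZMod.val hij
      simpa [ZMod.val_cast_of_lt i.2, ZMod.val_cast_of_lt j.2, Fin.ext_iff] using this
    calc ∑ j ∈ Finset.range N, d (k + (j : ZMod N))
        = ∑ i : Fin N, d (k + ((i : ℕ) : ZMod N)) :=
          (Fin.sum_univ_eq_sum_range (fun j => d (k + (j : ZMod N))) N).symm
      _ = ∑ c : ZMod N, d (k + c) := Fintype.sum_bijective _ hbij _ _ (fun i => rfl)
      _ = ∑ c : ZMod N, d c := Fintype.sum_equiv (Equiv.addLeft k) _ _ (fun c => rfl)
      _ = 0 := hd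
  have hSper : S N = S 0 := by
    rw [hS]
    simp only [Finset.sum_range_succ, hzero, Finset.sum_range_one]
    simp
  have hshift : ∀ ℓ : ℕ,
      y + δt • ∑ j ∈ Finset.range (ℓ + 1), d ((k + 1) + (j : ZMod N)) = x + δt • S (ℓ + 1) := by
    intro ℓ
    have h1 : S (ℓ + 1) = d k + ∑ j ∈ Finset.range (ℓ + 1), d ((k + 1) + (j : ZMod N)) := by
      rw [hS]
      dsimp only
      rw [Finset.sum_range_succ' (fun j => d (k + (j : ZMod N))) (ℓ + 1)]
      rw [add_comm]
      congr 1
      · simp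
      · refine Finset.sum_congr rfl fun j _ => ?_
        congr 1
        push_cast
        ring
    rw [h1, smul_add, hy]
    abel
  have hAk : A k x = Real.exp (β * V x) * (Finset.range N).inf' hne w := by
    rw [hA, mul_inf'_aux (Real.exp_nonneg _)]
    refine Finset.inf'_congr hne rfl fun ℓ _ => ?_
    rw [hw]
    dsimp only
    rw [← Real.exp_add, sub_eq_add_neg]
  have hAk1 : A (k + 1) y
      = Real.exp (β * V y) * (Finset.range N).inf' hne (fun ℓ => w (ℓ + 1)) := by
    rw [hA, mul_inf'_aux (Real.exp_nonneg _)]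
    refine Finset.inf'_congr hne rfl fun ℓ _ => ?_
    rw [hw]
    dsimp only
    rw [hshift ℓ, ← Real.exp_add, sub_eq_add_neg]
  have hMeq : (Finset.range N).inf' hne (fun ℓ => w (ℓ + 1)) = (Finset.range N).inf' hne w :=
    inf'_shift N hne w (by simp only [hw, hSper])
  have hMpos : 0 < (Finset.range N).inf' hne w :=
    (Finset.lt_inf'_iff hne).mpr fun i _ => Real.exp_pos _
  rw [hAk, hAk1, hMeq, mul_div_mul_right _ _ (ne_of_gt hMpos), ← Real.exp_sub]
end

section
/- Let N be a positive integer, E a real vector space, V : E → ℝ, β ∈ ℝ, δt ∈ ℝ, and d : ℤ/Nℤ → E with ∑_{k ∈ ℤ/Nℤ} d(k) = 0. For x ∈ E and k ∈ ℤ/Nℤ define the acceptance probability A_k(x) = min_{0 ≤ ℓ ≤ N−1} exp(β V(x) − β V(x + δt·(d(k) + d(k+1) + … + d(k+ℓ)))), with index arithmetic in ℤ/Nℤ. Then for every x ∈ E and k ∈ ℤ/Nℤ, exp(−β V(x + δt·d(k))) = exp(−β V(x))·A_k(x) + exp(−β V(x + δt·d(k)))·(1 − A_{k+1}(x + δt·d(k))).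 -/
/-!
Write `π = exp (-βV)` and `p_ℓ = x + δt (d_k + ⋯ + d_{k+ℓ})`. Then `π x · A_k x = min_ℓ π p_ℓ`,
the minimum of the target density along the cycle of points started at `(x, k)`. Because the
directions sum to zero, the partial sums of `d` along `k, k+1, …` are `N`-periodic, so the cycle
started at `(x + δt d_k, k + 1)` visits the same points, shifted by one step. Hence
`π x · A_k x = π (x + δt d_k) · A_{k+1} (x + δt d_k)`, which is the balance equation.
-/

open Finset Function

theorem ZMod.sum_range_natCast {M : Type*} [AddCommMonoid M] (N : ℕ) [NeZero N]
    (g : ZMod N → M) : ∑ j ∈ range N, g j = ∑ i, g i :=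
  sum_nbij' Nat.cast ZMod.val (by simp) (by simp [ZMod.val_lt])
    (fun _ hj ↦ ZMod.val_cast_of_lt (mem_range.mp hj)) (fun i _ ↦ ZMod.natCast_zmod_val i)
    (fun _ _ ↦ rfl)

namespace ZMod

variable {M : Type*} [AddCommMonoid M] {N : ℕ} (d : ZMod N → M) (k : ZMod N)

theorem periodic_sum_range_add_natCast [NeZero N] (hd : ∑ i, d i = 0) :
    Periodic (fun n : ℕ ↦ ∑ j ∈ range n, d (k + j)) N := fun n ↦ by
  simp only [sum_range_add, Nat.cast_add, ← add_assoc]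
  rw [sum_range_natCast N (fun i ↦ d (k + n + i)),
    Fintype.sum_equiv (Equiv.addLeft (k + n)) (fun i ↦ d (k + n + i)) d (fun _ ↦ rfl), hd,
    add_zero]

theorem sum_range_succ_add_natCast (n : ℕ) :
    ∑ j ∈ range (n + 1), d (k + j) = d k + ∑ j ∈ range n, d (k + 1 + j) := by
  simp only [sum_range_succ', Nat.cast_add, Nat.cast_one, Nat.cast_zero, add_zero, add_assoc,
    add_comm (1 : ZMod N)]
  exact add_comm _ _

end ZMod

namespace Function.Periodic

variable {α : Type*} [LinearOrder α] {f : ℕ → α} {N : ℕ}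

theorem isLeast_inf'_range (hf : Periodic f N) (h : (range N).Nonempty) :
    IsLeast (Set.range f) ((range N).inf' h f) := by
  refine ⟨?_, ?_⟩
  · obtain ⟨n, -, hn⟩ := exists_mem_eq_inf' h f
    exact ⟨n, hn.symm⟩
  · rintro _ ⟨n, rfl⟩
    rw [← hf.map_mod_nat n]
    exact inf'_le f (mem_range.mpr (Nat.mod_lt n (nonempty_range_iff.mp h).bot_lt))

theorem inf'_range_comp_add (hf : Periodic f N) (h : (range N).Nonempty) (c : ℕ) :
    (range N).inf' h (fun n ↦ f (n + c)) = (range N).inf' h f := by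
  have hrange : Set.range (fun n ↦ f (n + c)) = Set.range f := by
    refine (Set.range_comp_subset_range _ f).antisymm ?_
    rintro _ ⟨n, rfl⟩
    have hN : 0 < N := (nonempty_range_iff.mp h).bot_lt
    refine ⟨n + c * N - c, ?_⟩
    change f (n + c * N - c + c) = f n
    rw [Nat.sub_add_cancel (by nlinarith)]
    exact hf.nat_mul c n
  exact ((hf.add_const c).isLeast_inf'_range h).unique (hrange ▸ hf.isLeast_inf'_range h)

end Function.Periodic

theorem Finset.mul₀_inf' {ι G₀ : Type*} [GroupWithZero G₀] [SemilatticeInf G₀] [PosMulReflectLT G₀]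
    {a : G₀} (ha : 0 < a) (s : Finset ι) (hs : s.Nonempty) (f : ι → G₀) :
    a * s.inf' hs f = s.inf' hs (fun i ↦ a * f i) :=
  map_finset_inf' (OrderIso.mulLeft₀ a ha) hs f

/-- balance equation (5.16) of Remark 5.8. With acceptance
probabilities `A_k(x) = min_{0 ≤ ℓ ≤ N-1} exp (βV(x) - βV(x + δt·(d_k + … + d_{k+ℓ})))`
for cyclic directions summing to zero, the density `e^{-βV}` satisfies the balance
equation of the time-discretized lifted Metropolis chain. -/
theorem lifted_metropolis_balance
    (N : ℕ) [NeZero N] {E : Type*} [AddCommGroup E] [Module ℝ E]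
    (V : E → ℝ) (β δt : ℝ) (d : ZMod N → E) (hd : ∑ k : ZMod N, d k = 0)
    (A : ZMod N → E → ℝ)
    (hA : ∀ k x, A k x = (Finset.range N).inf'
      (Finset.nonempty_range_iff.mpr (NeZero.ne N))
      (fun ℓ => Real.exp (β * V x
        - β * V (x + δt • ∑ j ∈ Finset.range (ℓ + 1), d (k + (j : ZMod N))))))
    (x : E) (k : ZMod N) :
    Real.exp (-(β * V (x + δt • d k)))
      = Real.exp (-(β * V x)) * A k x
        + Real.exp (-(β * V (x + δt • d k))) * (1 - A (k + 1) (x + δt • d k)) := by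
  have weighted : ∀ i z, Real.exp (-(β * V z)) * A i z
      = (range N).inf' (nonempty_range_iff.mpr (NeZero.ne N))
        (fun ℓ ↦ Real.exp (-(β * V (z + δt • ∑ j ∈ range (ℓ + 1), d (i + j))))) := by
    intro i z
    rw [hA, mul₀_inf' (Real.exp_pos _)]
    refine inf'_congr _ rfl fun ℓ _ ↦ ?_
    rw [← Real.exp_add]
    ring_nf
  have flow : Real.exp (-(β * V x)) * A k x
      = Real.exp (-(β * V (x + δt • d k))) * A (k + 1) (x + δt • d k) := by
    simp only [weighted, add_assoc x, ← smul_add, ← ZMod.sum_range_succ_add_natCast]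
    exact (((ZMod.periodic_sum_range_add_natCast d k hd).comp
      (fun s ↦ Real.exp (-(β * V (x + δt • s))))).add_const 1).inf'_range_comp_add _ 1 |>.symm
  rw [flow]
  ring
end

section
/- Let (Ω, ℙ) be a probability space and λ > 0. Let (t_m)_{m≥1} be nonnegative real numbers with ∑_{m≥1} t_m = ∞, and set s_0 = 0 and s_m = t_1 + … + t_m. Let (τ_m)_{m≥1} be nonnegative real-valued random variables such that ℙ(τ_1 > t) = exp(−λt) for all t ≥ 0 and, for every m ≥ 2 and every t ≥ 0, the conditional probability ℙ(τ_m > t ∣ τ_1 > t_1, …, τ_{m−1} > t_{m−1}) = exp(−λt). Define L = inf{m ≥ 1 : τ_m ≤ t_m}. Then for every real u < λ, E[e^{u(s_{L−1} + τ_L)}] = λ/(λ − u). -/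
set_option maxHeartbeats 1000000

open MeasureTheory Set

lemma aux_integral_exp_expMeasure {l u : ℝ} (hl : 0 < l) (hu : u < l) :
    ∫ x, Real.exp (u * x) ∂(ProbabilityTheory.expMeasure l) = l / (l - u) := by
  have hlu : 0 < l - u := by linarith
  set g : ℝ → ℝ := Set.indicator (Ici 0) (fun x => l * Real.exp (-((l - u) * x))) with hg
  have hgnn : 0 ≤ g := Set.indicator_nonneg (fun x _ => by positivity)
  have hgint : Integrable g := by
    rw [hg, integrable_indicator_iff measurableSet_Ici,
      integrableOn_Ici_iff_integrableOn_Ioi]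
    have := (exp_neg_integrableOn_Ioi 0 hlu).const_mul l
    simpa only [neg_mul, IntegrableOn] using this
  have hpdf : ∀ x, ProbabilityTheory.exponentialPDF l x * ENNReal.ofReal (Real.exp (u * x))
      = ENNReal.ofReal (g x) := by
    intro x
    rw [ProbabilityTheory.exponentialPDF_eq, ← ENNReal.ofReal_mul (by positivity)]
    congr 1
    rw [hg]
    by_cases hx : 0 ≤ x
    · rw [if_pos hx, Set.indicator_of_mem (mem_Ici.2 hx), mul_assoc, ← Real.exp_add]
      ring_nf
    · rw [if_neg hx, Set.indicator_of_notMem (by simpa using hx), zero_mul]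
  have hmap : ProbabilityTheory.expMeasure l
      = MeasureTheory.Measure.withDensity volume (ProbabilityTheory.exponentialPDF l) := rfl
  have hpdfmeas : Measurable (ProbabilityTheory.exponentialPDF l) :=
    (ProbabilityTheory.measurable_exponentialPDFReal l).ennreal_ofReal
  rw [hmap]
  rw [integral_eq_lintegral_of_nonneg_ae (ae_of_all _ fun x => (Real.exp_pos _).le)
    (Measurable.aestronglyMeasurable (by fun_prop))]
  rw [lintegral_withDensity_eq_lintegral_mul _ hpdfmeas (by fun_prop)]
  have h2 : ∫⁻ x, (ProbabilityTheory.exponentialPDF l * fun x => ENNReal.ofReal (Real.exp (u * x))) x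
      = ∫⁻ x, ENNReal.ofReal (g x) := by
    congr 1; funext x; exact hpdf x
  rw [h2, ← ofReal_integral_eq_lintegral_ofReal hgint (ae_of_all _ hgnn),
    ENNReal.toReal_ofReal (integral_nonneg hgnn)]
  have h3 : ∫ x, g x = ∫ x in Ioi (0:ℝ), l * Real.exp (-((l - u) * x)) := by
    rw [hg, integral_indicator measurableSet_Ici, ← integral_Ici_eq_integral_Ioi]
  have h4 : ∫ x in Ioi (0:ℝ), Real.exp (-((l - u) * x)) = (l - u)⁻¹ := by
    have h := integral_comp_mul_left_Ioi (fun y => Real.exp (-y)) 0 hlu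
    simp only [mul_zero, integral_exp_neg_Ioi_zero, smul_eq_mul, mul_one] at h
    exact h
  rw [h3, integral_const_mul, h4, div_eq_mul_inv]

lemma aux_map_eq_expMeasure {Ω : Type*} [MeasurableSpace Ω] (P : Measure Ω)
    [IsProbabilityMeasure P] {l : ℝ} (hl : 0 < l) {X : Ω → ℝ} (hX : Measurable X)
    (hX0 : ∀ ω, 0 ≤ X ω)
    (hsurv : ∀ x : ℝ, 0 ≤ x → P {ω | x < X ω} = ENNReal.ofReal (Real.exp (-l * x))) :
    P.map X = ProbabilityTheory.expMeasure l := by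
  haveI := ProbabilityTheory.isProbabilityMeasure_expMeasure hl
  haveI : IsProbabilityMeasure (P.map X) := Measure.isProbabilityMeasure_map hX.aemeasurable
  refine Measure.ext_of_Iic (P.map X) _ (fun x => ?_)
  have hexp : ProbabilityTheory.expMeasure l (Iic x)
      = ENNReal.ofReal (if 0 ≤ x then 1 - Real.exp (-(l * x)) else 0) := by
    have h1 := ProbabilityTheory.cdf_expMeasure_eq hl x
    have h2 : ProbabilityTheory.cdf (ProbabilityTheory.expMeasure l) x
        = (ProbabilityTheory.expMeasure l (Iic x)).toReal :=
      ProbabilityTheory.cdf_eq_real _ x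
    rw [h2] at h1
    rw [← h1, ENNReal.ofReal_toReal (measure_ne_top _ _)]
  rw [Measure.map_apply hX measurableSet_Iic, hexp]
  by_cases hx : 0 ≤ x
  · have hc : X ⁻¹' Iic x = {ω | x < X ω}ᶜ := by
      ext ω; simp [not_lt]
    rw [hc, measure_compl (measurableSet_lt measurable_const hX) (measure_ne_top _ _), measure_univ,
      hsurv x hx, if_pos hx]
    rw [ENNReal.ofReal_sub _ (Real.exp_pos _).le, ENNReal.ofReal_one, neg_mul]
  · have hc : X ⁻¹' Iic x = ∅ := by
      ext ω
      simp only [mem_preimage, mem_Iic, mem_empty_iff_false, iff_false, not_le]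
      exact lt_of_lt_of_le (lt_of_not_ge hx) (hX0 ω)
    rw [hc, if_neg hx]
    simp

/-- Moment generating function of the accumulated escape time
`s_{L-1} + τ_L` produced by the parallel step: `E[e^{u(s_{L-1} + τ_L)}] = l/(l-u)`
for every `u < l`, i.e. it is exponential with rate `l`. -/
theorem parallel_step_mgf_continuous
    {Ω : Type*} [MeasurableSpace Ω] (P : Measure Ω) [IsProbabilityMeasure P]
    (l : ℝ) (hl : 0 < l)
    (t : ℕ → ℝ) (ht : ∀ m, 0 ≤ t m)
    (hdiv : Filter.Tendsto (fun M => ∑ i ∈ Finset.Icc 1 M, t i)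
      Filter.atTop Filter.atTop)
    (τ : ℕ → Ω → ℝ) (hτmeas : ∀ m, Measurable (τ m)) (hτnonneg : ∀ m ω, 0 ≤ τ m ω)
    (h1 : ∀ u : ℝ, 0 ≤ u → P {ω | u < τ 1 ω} = ENNReal.ofReal (Real.exp (-l * u)))
    (hrec : ∀ m, 2 ≤ m → ∀ u : ℝ, 0 ≤ u →
      P ({ω | u < τ m ω} ∩ ⋂ j ∈ Finset.Icc 1 (m - 1), {ω | t j < τ j ω})
          / P (⋂ j ∈ Finset.Icc 1 (m - 1), {ω | t j < τ j ω})
        = ENNReal.ofReal (Real.exp (-l * u)))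
    (L : Ω → ℕ) (hL : ∀ ω, L ω = sInf {m | 1 ≤ m ∧ τ m ω ≤ t m}) :
    ∀ u : ℝ, u < l →
      ∫ ω, Real.exp (u * ((∑ i ∈ Finset.Icc 1 (L ω - 1), t i) + τ (L ω) ω)) ∂P
        = l / (l - u) := by
  intro u hu
  set s : ℕ → ℝ := fun M => ∑ i ∈ Finset.Icc 1 M, t i with hs
  set A : ℕ → Set Ω := fun M => ⋂ j ∈ Finset.Icc 1 M, {ω | t j < τ j ω} with hA
  set X : Ω → ℝ := fun ω => s (L ω - 1) + τ (L ω) ω with hX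
  -- basic facts about `s`
  have hsmono : Monotone s := fun a b hab =>
    Finset.sum_le_sum_of_subset_of_nonneg (Finset.Icc_subset_Icc_right hab)
      (fun i _ _ => ht i)
  have hs0 : s 0 = 0 := by simp [hs]
  have hssucc : ∀ M, s (M + 1) = s M + t (M + 1) := fun M =>
    Finset.sum_Icc_succ_top (by omega) t
  have hsnn : ∀ M, 0 ≤ s M := fun M => Finset.sum_nonneg fun i _ => ht i
  -- basic facts about `A`
  have hmemA : ∀ M ω, ω ∈ A M ↔ ∀ j, 1 ≤ j → j ≤ M → t j < τ j ω := by
    intro M ω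
    simp [hA, Finset.mem_Icc, and_imp]
  have hA0 : A 0 = univ := by
    ext ω
    simp only [hmemA, mem_univ, iff_true]
    intro j h1j h0j; omega
  have hAsucc : ∀ M, A (M + 1) = A M ∩ {ω | t (M + 1) < τ (M + 1) ω} := by
    intro M
    ext ω
    rw [mem_inter_iff, hmemA, hmemA, mem_setOf_eq]
    constructor
    · intro h
      exact ⟨fun j hj1 hj2 => h j hj1 (by omega), h (M + 1) (by omega) le_rfl⟩
    · rintro ⟨h, h2⟩ j hj1 hj2
      by_cases hjM : j ≤ M
      · exact h j hj1 hjM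
      · have : j = M + 1 := by omega
        rw [this]; exact h2
  have hAmeas : ∀ M, MeasurableSet (A M) := by
    intro M
    rw [hA]
    exact MeasurableSet.biInter (Set.to_countable _)
      (fun j _ => measurableSet_lt measurable_const (hτmeas j))
  -- probability of `A M`
  have PA : ∀ M, P (A M) = ENNReal.ofReal (Real.exp (-l * s M)) := by
    intro M
    induction M with
    | zero => rw [hA0, hs0, measure_univ]; simp
    | succ M ih =>
      have hne : P (A M) ≠ 0 := by
        rw [ih]
        simp only [ne_eq, ENNReal.ofReal_eq_zero, not_le]
        exact Real.exp_pos _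
      have hnetop : P (A M) ≠ ⊤ := measure_ne_top _ _
      have hunion : A (M + 1) = {ω | t (M + 1) < τ (M + 1) ω} ∩ A M := by
        rw [hAsucc M, inter_comm]
      have key : P (A (M + 1)) = ENNReal.ofReal (Real.exp (-l * t (M + 1))) * P (A M) := by
        match M with
        | 0 =>
          rw [hunion, hA0, inter_univ, measure_univ, mul_one]
          exact h1 (t 1) (ht 1)
        | k + 1 =>
          have h := hrec (k + 2) (by omega) (t (k + 2)) (ht (k + 2))
          have hAeq : (⋂ j ∈ Finset.Icc 1 (k + 2 - 1), {ω | t j < τ j ω}) = A (k + 1) := rfl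
          rw [hAeq] at h
          rw [hunion, mul_comm]
          exact ((ENNReal.eq_div_iff hne hnetop).mp h.symm).symm
      rw [key, ih, ← ENNReal.ofReal_mul (Real.exp_pos _).le, ← Real.exp_add, hssucc M]
      congr 2
      ring
  -- the key conditional-measure computation
  have Qlem : ∀ (m : ℕ) (y : ℝ), P (A m ∩ {ω | y < τ (m + 1) ω})
      = ENNReal.ofReal (Real.exp (-l * (max y 0 + s m))) := by
    intro m y
    rcases lt_or_ge y 0 with hy | hy
    · have huniv : {ω | y < τ (m + 1) ω} = univ :=
        eq_univ_of_forall fun ω => lt_of_lt_of_le hy (hτnonneg _ ω)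
      rw [huniv, inter_univ, PA m, max_eq_right hy.le, zero_add]
    · match m with
      | 0 =>
        rw [hA0, univ_inter, h1 y hy, max_eq_left hy, hs0, add_zero]
      | k + 1 =>
        have hne : P (A (k + 1)) ≠ 0 := by
          rw [PA]
          simp only [ne_eq, ENNReal.ofReal_eq_zero, not_le]
          exact Real.exp_pos _
        have hnetop : P (A (k + 1)) ≠ ⊤ := measure_ne_top _ _
        have h := hrec (k + 2) (by omega) y hy
        have hAeq : (⋂ j ∈ Finset.Icc 1 (k + 2 - 1), {ω | t j < τ j ω}) = A (k + 1) := rfl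
        rw [hAeq] at h
        have key : P (A (k + 1) ∩ {ω | y < τ (k + 2) ω})
            = ENNReal.ofReal (Real.exp (-l * y)) * P (A (k + 1)) := by
          rw [inter_comm, mul_comm]
          exact ((ENNReal.eq_div_iff hne hnetop).mp h.symm).symm
        rw [key, PA, ← ENNReal.ofReal_mul (Real.exp_pos _).le, ← Real.exp_add,
          max_eq_left hy]
        congr 2
        ring
  -- characterization of `L`
  have hLeq : ∀ m : ℕ, {ω | L ω = m + 1} = A m ∩ {ω | τ (m + 1) ω ≤ t (m + 1)} := by
    intro m
    ext ω
    simp only [mem_setOf_eq, mem_inter_iff, hmemA]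
    rw [hL ω]
    constructor
    · intro hinf
      have hSne : Set.Nonempty {n | 1 ≤ n ∧ τ n ω ≤ t n} := by
        by_contra hS
        rw [Set.not_nonempty_iff_eq_empty] at hS
        rw [hS, Nat.sInf_empty] at hinf
        omega
      have hmem := Nat.sInf_mem hSne
      rw [hinf] at hmem
      refine ⟨fun j hj1 hjm => ?_, hmem.2⟩
      by_contra hcon
      push_neg at hcon
      have hjS : j ∈ {n | 1 ≤ n ∧ τ n ω ≤ t n} := ⟨hj1, hcon⟩
      have := Nat.sInf_le hjS
      omega
    · rintro ⟨hAm, hτle⟩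
      have hmem : m + 1 ∈ {n | 1 ≤ n ∧ τ n ω ≤ t n} := ⟨by omega, hτle⟩
      refine le_antisymm (Nat.sInf_le hmem) ?_
      by_contra hcon
      push_neg at hcon
      have hmem2 := Nat.sInf_mem (⟨m + 1, hmem⟩ : Set.Nonempty _)
      have h1' := hmem2.1
      have := hAm (sInf {n | 1 ≤ n ∧ τ n ω ≤ t n}) h1' (by omega)
      exact absurd hmem2.2 (not_le.mpr this)
  -- measurability of `L`
  have hLmeas : Measurable L := by
    apply measurable_to_countable'
    intro m
    match m with
    | 0 =>
      have hpre : L ⁻¹' {0} = ⋂ M, A M := by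
        ext ω
        simp only [mem_preimage, mem_singleton_iff, mem_iInter, hmemA]
        rw [hL ω]
        constructor
        · intro h0 M j hj1 hjM
          by_contra hcon
          push_neg at hcon
          have hjS : j ∈ {n | 1 ≤ n ∧ τ n ω ≤ t n} := ⟨hj1, hcon⟩
          have h2 := Nat.sInf_mem (⟨j, hjS⟩ : Set.Nonempty _)
          rw [h0] at h2
          exact absurd h2.1 (by omega)
        · intro h
          have hempty : {n | 1 ≤ n ∧ τ n ω ≤ t n} = ∅ := by
            ext n
            simp only [mem_setOf_eq, mem_empty_iff_false, iff_false, not_and, not_le]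
            intro hn
            exact h n n hn le_rfl
          rw [hempty, Nat.sInf_empty]
      rw [hpre]
      exact MeasurableSet.iInter fun M => hAmeas M
    | m + 1 =>
      have hpre : L ⁻¹' {m + 1} = A m ∩ {ω | τ (m + 1) ω ≤ t (m + 1)} := by
        rw [show L ⁻¹' {m + 1} = {ω | L ω = m + 1} from rfl, hLeq m]
      rw [hpre]
      exact (hAmeas m).inter (measurableSet_le (hτmeas _) measurable_const)
  -- measurability and nonnegativity of `X`
  have hXmeas : Measurable X := by
    have hF : Measurable (fun p : Ω × ℕ => s (p.2 - 1) + τ p.2 p.1) := by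
      apply measurable_from_prod_countable_left
      intro m
      show Measurable fun ω : Ω => s (m - 1) + τ m ω
      exact measurable_const.add (hτmeas m)
    exact hF.comp (measurable_id.prodMk hLmeas)
  have hX0 : ∀ ω, 0 ≤ X ω := fun ω => add_nonneg (hsnn _) (hτnonneg _ _)
  -- the key induction
  have KEY : ∀ x : ℝ, 0 ≤ x → ∀ M, P ({ω | x < X ω} ∩ (A M)ᶜ)
      = ENNReal.ofReal (Real.exp (-l * x)) - ENNReal.ofReal (Real.exp (-l * max x (s M))) := by
    intro x hx M
    induction M with
    | zero =>
      rw [hA0, compl_univ, inter_empty, measure_empty, hs0, max_eq_left hx, tsub_self]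
    | succ M ih =>
      have hLset : ∀ ω, ω ∈ A M ∩ {ω | τ (M + 1) ω ≤ t (M + 1)} → L ω = M + 1 := by
        intro ω hω
        have := hLeq M
        rw [Set.ext_iff] at this
        exact (this ω).mpr hω
      have hXeq : ∀ ω, ω ∈ A M ∩ {ω | τ (M + 1) ω ≤ t (M + 1)} →
          X ω = s M + τ (M + 1) ω := by
        intro ω hω
        have hLω := hLset ω hω
        simp only [hX, hLω, Nat.add_sub_cancel]
      have hsetsplit : {ω | x < X ω} ∩ (A (M + 1))ᶜ
          = ({ω | x < X ω} ∩ (A M)ᶜ)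
            ∪ (A M ∩ {ω | τ (M + 1) ω ≤ t (M + 1)} ∩ {ω | x - s M < τ (M + 1) ω}) := by
        ext ω
        simp only [mem_inter_iff, mem_union, mem_compl_iff, mem_setOf_eq]
        constructor
        · rintro ⟨hXω, hA1⟩
          by_cases hAM : ω ∈ A M
          · have hτle : τ (M + 1) ω ≤ t (M + 1) := by
              by_contra hc
              push_neg at hc
              exact hA1 (by rw [hAsucc M]; exact ⟨hAM, hc⟩)
            refine Or.inr ⟨⟨hAM, hτle⟩, ?_⟩
            have := hXeq ω ⟨hAM, hτle⟩
            rw [this] at hXω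
            linarith
          · exact Or.inl ⟨hXω, hAM⟩
        · rintro (⟨hXω, hAM⟩ | ⟨⟨hAM, hτle⟩, hxs⟩)
          · refine ⟨hXω, fun hc => hAM ?_⟩
            rw [hAsucc M] at hc
            exact hc.1
          · have hX2 := hXeq ω ⟨hAM, hτle⟩
            refine ⟨by rw [hX2]; linarith, ?_⟩
            rw [hAsucc M]
            rintro ⟨_, hc⟩
            exact absurd hτle (not_le.mpr hc)
      have hdisj : Disjoint ({ω | x < X ω} ∩ (A M)ᶜ)
          (A M ∩ {ω | τ (M + 1) ω ≤ t (M + 1)} ∩ {ω | x - s M < τ (M + 1) ω}) := by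
        rw [Set.disjoint_left]
        rintro ω ⟨_, hAM⟩ ⟨⟨hAM', _⟩, _⟩
        exact hAM hAM'
      have hmeas2 : MeasurableSet
          (A M ∩ {ω | τ (M + 1) ω ≤ t (M + 1)} ∩ {ω | x - s M < τ (M + 1) ω}) :=
        ((hAmeas M).inter (measurableSet_le (hτmeas _) measurable_const)).inter
          (measurableSet_lt measurable_const (hτmeas _))
      rw [hsetsplit, measure_union hdisj hmeas2, ih]
      rcases le_or_gt x (s (M + 1)) with hxs | hxs
      · have hdiffeq : A M ∩ {ω | τ (M + 1) ω ≤ t (M + 1)} ∩ {ω | x - s M < τ (M + 1) ω}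
            = (A M ∩ {ω | x - s M < τ (M + 1) ω}) \ (A M ∩ {ω | t (M + 1) < τ (M + 1) ω}) := by
          ext ω
          simp only [mem_inter_iff, mem_diff, mem_setOf_eq, not_and, not_lt]
          constructor
          · rintro ⟨⟨hAM, hτle⟩, hxτ⟩
            exact ⟨⟨hAM, hxτ⟩, fun _ => hτle⟩
          · rintro ⟨⟨hAM, hxτ⟩, himp⟩
            exact ⟨⟨hAM, himp hAM⟩, hxτ⟩
        have hsub : A M ∩ {ω | t (M + 1) < τ (M + 1) ω}
            ⊆ A M ∩ {ω | x - s M < τ (M + 1) ω} := by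
          intro ω hω
          simp only [mem_inter_iff, mem_setOf_eq] at hω ⊢
          obtain ⟨hAM, hτ⟩ := hω
          refine ⟨hAM, lt_of_le_of_lt ?_ hτ⟩
          rw [hssucc M] at hxs
          linarith
        have hQ1 : P (A M ∩ {ω | x - s M < τ (M + 1) ω})
            = ENNReal.ofReal (Real.exp (-l * max x (s M))) := by
          rw [Qlem M (x - s M)]
          congr 3
          rw [← max_add_add_right]
          simp
        have hQ2 : P (A M ∩ {ω | t (M + 1) < τ (M + 1) ω})
            = ENNReal.ofReal (Real.exp (-l * s (M + 1))) := by
          rw [← hAsucc M, PA]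
        rw [hdiffeq, measure_diff hsub
          (((hAmeas M).inter (measurableSet_lt measurable_const (hτmeas _))).nullMeasurableSet)
          (measure_ne_top _ _), hQ1, hQ2, max_eq_right hxs]
        have hle1 : ENNReal.ofReal (Real.exp (-l * max x (s M)))
            ≤ ENNReal.ofReal (Real.exp (-l * x)) := by
          apply ENNReal.ofReal_le_ofReal
          apply Real.exp_le_exp.mpr
          have := le_max_left x (s M)
          nlinarith
        have hle2 : ENNReal.ofReal (Real.exp (-l * s (M + 1)))
            ≤ ENNReal.ofReal (Real.exp (-l * max x (s M))) := by
          apply ENNReal.ofReal_le_ofReal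
          apply Real.exp_le_exp.mpr
          have h1' : max x (s M) ≤ s (M + 1) := max_le hxs (hsmono (by omega))
          nlinarith
        exact tsub_add_tsub_cancel hle1 hle2
      · have hempty : A M ∩ {ω | τ (M + 1) ω ≤ t (M + 1)} ∩ {ω | x - s M < τ (M + 1) ω}
            = ∅ := by
          ext ω
          simp only [mem_inter_iff, mem_setOf_eq, mem_empty_iff_false, iff_false, not_and]
          rintro ⟨hAM, hτle⟩
          rw [hssucc M] at hxs
          intro hc
          linarith
        rw [hempty, measure_empty, add_zero]
        have hmax1 : max x (s M) = x := max_eq_left (le_trans (hsmono (by omega)) hxs.le)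
        have hmax2 : max x (s (M + 1)) = x := max_eq_left hxs.le
        rw [hmax1, hmax2]
  -- the survival function of `X`
  have hsurv : ∀ x : ℝ, 0 ≤ x → P {ω | x < X ω} = ENNReal.ofReal (Real.exp (-l * x)) := by
    intro x hx
    obtain ⟨M, hM⟩ := (hdiv.eventually_gt_atTop x).exists
    have hN : P (⋂ M', A M') = 0 := by
      have hle : ∀ M' : ℕ, P (⋂ M'', A M'') ≤ ENNReal.ofReal (Real.exp (-l * s M')) := by
        intro M'
        rw [← PA M']
        exact measure_mono (iInter_subset _ M')
      have htend : Filter.Tendsto (fun M' => ENNReal.ofReal (Real.exp (-l * s M')))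
          Filter.atTop (nhds 0) := by
        rw [← ENNReal.ofReal_zero]
        apply ENNReal.tendsto_ofReal
        apply Real.tendsto_exp_atBot.comp
        exact hdiv.const_mul_atTop_of_neg (by linarith)
      exact le_antisymm (ge_of_tendsto htend (Filter.Eventually.of_forall hle)) zero_le
    have hsub : A M \ {ω | x < X ω} ⊆ ⋂ M', A M' := by
      rintro ω ⟨hAM, hXle⟩
      simp only [mem_setOf_eq, not_lt] at hXle
      rw [mem_iInter]
      intro M'
      rw [hmemA]
      intro j hj1 hjM'
      by_contra hcon
      push_neg at hcon
      have hjS : j ∈ {n | 1 ≤ n ∧ τ n ω ≤ t n} := ⟨hj1, hcon⟩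
      have hLmem := Nat.sInf_mem (⟨j, hjS⟩ : Set.Nonempty _)
      rw [← hL ω] at hLmem
      have hLgt : M + 1 ≤ L ω := by
        by_contra hc
        push_neg at hc
        have := (hmemA M ω).mp hAM (L ω) hLmem.1 (by omega)
        exact absurd hLmem.2 (not_le.mpr this)
      have hXge : s M ≤ X ω := by
        have h1' : s M ≤ s (L ω - 1) := hsmono (by omega)
        have h2' := hτnonneg (L ω) ω
        simp only [hX]
        linarith
      linarith
    have hPAint : P ({ω | x < X ω} ∩ A M) = P (A M) := by
      refine le_antisymm (measure_mono inter_subset_right) ?_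
      calc P (A M) ≤ P ({ω | x < X ω} ∩ A M) + P (A M \ {ω | x < X ω}) := by
            refine le_trans (measure_mono ?_) (measure_union_le _ _)
            intro ω hω
            by_cases hxX : x < X ω
            · exact Or.inl ⟨hxX, hω⟩
            · exact Or.inr ⟨hω, hxX⟩
        _ ≤ P ({ω | x < X ω} ∩ A M) + 0 :=
            add_le_add le_rfl (le_trans (measure_mono hsub) hN.le)
        _ = P ({ω | x < X ω} ∩ A M) := add_zero _
    have hsplit := measure_inter_add_diff (μ := P) {ω | x < X ω} (hAmeas M)
    rw [diff_eq] at hsplit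
    rw [← hsplit, hPAint, KEY x hx M, max_eq_right hM.le, PA M, add_comm]
    have hle' : ENNReal.ofReal (Real.exp (-l * s M)) ≤ ENNReal.ofReal (Real.exp (-l * x)) := by
      apply ENNReal.ofReal_le_ofReal
      apply Real.exp_le_exp.mpr
      nlinarith [hM.le]
    rw [tsub_add_cancel_of_le hle']
  -- conclusion
  have hmapX := aux_map_eq_expMeasure P hl hXmeas hX0 hsurv
  show ∫ ω, Real.exp (u * X ω) ∂P = l / (l - u)
  have hmi := integral_map (μ := P) (f := fun y => Real.exp (u * y)) hXmeas.aemeasurable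
    (Measurable.aestronglyMeasurable (by fun_prop))
  rw [← hmi, hmapX, aux_integral_exp_expMeasure hl hu]
end

section
/- Let (Ω, ℙ) be a probability space and p ∈ (0,1). Let (t_m)_{m≥1} be positive integers with ∑_{m≥1} t_m = ∞, and set s_0 = 0 and s_m = t_1 + … + t_m. Let (τ_m)_{m≥1} be positive-integer-valued random variables such that ℙ(τ_1 > n) = (1−p)ⁿ for all n ∈ ℕ and, for every m ≥ 2 and every n ∈ ℕ, the conditional probability ℙ(τ_m > n ∣ τ_1 > t_1, …, τ_{m−1} > t_{m−1}) = (1−p)ⁿ. Define L = inf{m ≥ 1 : τ_m ≤ t_m}. Then for every real u < −log(1−p), E[e^{u(s_{L−1} + τ_L)}] = p·e^{u}/(1 − (1−p)e^{u}). -/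
open MeasureTheory

set_option maxHeartbeats 1600000

/-- Moment generating function of the accumulated escape time
`s_{L-1} + τ_L` in the discrete-time case:
`E[e^{u(s_{L-1} + τ_L)}] = p e^u / (1 - (1-p)e^u)` for every `u < -log(1-p)`,
i.e. it is geometric with parameter `p` (supported on `{1, 2, …}`). -/
theorem parallel_step_mgf_discrete
    {Ω : Type*} [MeasurableSpace Ω] (P : Measure Ω) [IsProbabilityMeasure P]
    (p : ℝ) (hp0 : 0 < p) (hp1 : p < 1)
    (t : ℕ → ℕ) (ht : ∀ m, 1 ≤ m → 1 ≤ t m)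
    (hdiv : Filter.Tendsto (fun M => ∑ i ∈ Finset.Icc 1 M, t i)
      Filter.atTop Filter.atTop)
    (τ : ℕ → Ω → ℕ) (hτmeas : ∀ m, Measurable (τ m))
    (hτpos : ∀ m ω, 1 ≤ m → 1 ≤ τ m ω)
    (h1 : ∀ n : ℕ, P {ω | n < τ 1 ω} = ENNReal.ofReal ((1 - p) ^ n))
    (hrec : ∀ m, 2 ≤ m → ∀ n : ℕ,
      P ({ω | n < τ m ω} ∩ ⋂ j ∈ Finset.Icc 1 (m - 1), {ω | t j < τ j ω})
          / P (⋂ j ∈ Finset.Icc 1 (m - 1), {ω | t j < τ j ω})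
        = ENNReal.ofReal ((1 - p) ^ n))
    (L : Ω → ℕ) (hL : ∀ ω, L ω = sInf {m | 1 ≤ m ∧ τ m ω ≤ t m}) :
    ∀ u : ℝ, u < -Real.log (1 - p) →
      ∫ ω, Real.exp (u * (((∑ i ∈ Finset.Icc 1 (L ω - 1), t i : ℕ) : ℝ)
          + (τ (L ω) ω : ℝ))) ∂P
        = p * Real.exp u / (1 - (1 - p) * Real.exp u) := by
  intro u hu
  have hq0 : (0:ℝ) < 1 - p := by linarith
  have hq1 : (1:ℝ) - p < 1 := by linarith
  set q : ℝ := 1 - p with hqdef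
  -- the partial sums s
  set s : ℕ → ℕ := fun m => ∑ i ∈ Finset.Icc 1 m, t i with hsdef
  have hs0 : s 0 = 0 := by simp [hsdef]
  have hssucc : ∀ m : ℕ, s (m + 1) = s m + t (m + 1) := by
    intro m
    simpa [hsdef] using Finset.sum_Icc_succ_top (by omega : 1 ≤ m + 1) t
  have hsmono : Monotone s := by
    intro a b hab
    exact Finset.sum_le_sum_of_subset (Finset.Icc_subset_Icc_right hab)
  have hdiv' : Filter.Tendsto s Filter.atTop Filter.atTop := hdiv
  -- the sets B m
  set B : ℕ → Set Ω := fun m => ⋂ j ∈ Finset.Icc 1 m, {ω | t j < τ j ω} with hBdef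
  have hBeq : ∀ k, (⋂ j ∈ Finset.Icc 1 k, {ω | t j < τ j ω}) = B k := fun k => by
    rw [hBdef]
  have hBmem : ∀ m ω, ω ∈ B m ↔ ∀ j, 1 ≤ j → j ≤ m → t j < τ j ω := by
    intro m ω
    rw [← hBeq]
    simp only [Set.mem_iInter, Finset.mem_Icc, Set.mem_setOf_eq]
    exact ⟨fun h j h1' h2' => h j ⟨h1', h2'⟩, fun h j hj => h j hj.1 hj.2⟩
  have hBmeas : ∀ m, MeasurableSet (B m) := by
    intro m
    rw [← hBeq]
    exact Finset.measurableSet_biInter _ fun j _ =>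
      (hτmeas j) (show MeasurableSet {x : ℕ | t j < x} from trivial)
  have hB0 : B 0 = Set.univ := by
    ext ω; simp [hBmem 0 ω]; omega
  have hBsucc : ∀ m, B (m + 1) = {ω | t (m+1) < τ (m+1) ω} ∩ B m := by
    intro m
    ext ω
    simp only [hBmem, Set.mem_inter_iff, Set.mem_setOf_eq]
    constructor
    · intro h
      exact ⟨h (m+1) (by omega) le_rfl, fun j h1' h2' => h j h1' (by omega)⟩
    · rintro ⟨h1', h2'⟩ j hj1 hj2
      rcases Nat.lt_or_ge j (m+1) with h | h
      · exact h2' j hj1 (by omega)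
      · have : j = m + 1 := by omega
        rw [this]; exact h1'
  -- key measure computations
  have key : ∀ m, P (B m) = ENNReal.ofReal (q ^ s m) ∧
      ∀ n : ℕ, P ({ω | n < τ (m+1) ω} ∩ B m) = ENNReal.ofReal (q ^ n) * P (B m) := by
    intro m
    induction m with
    | zero =>
      constructor
      · rw [hB0, hs0]; simp
      · intro n
        rw [hB0, Set.inter_univ, h1 n, measure_univ, mul_one]
    | succ m ih =>
      have hPB : P (B (m+1)) = ENNReal.ofReal (q ^ s (m+1)) := by
        rw [hBsucc, ih.2 (t (m+1)), ih.1,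
          ← ENNReal.ofReal_mul (by positivity), ← pow_add, hssucc, Nat.add_comm]
      refine ⟨hPB, fun n => ?_⟩
      have h2 := hrec (m+2) (by omega) n
      have hm21 : (m + 2) - 1 = m + 1 := rfl
      rw [hm21, hBeq (m+1)] at h2
      have hne0 : P (B (m+1)) ≠ 0 := by
        rw [hPB]
        simp only [ne_eq, ENNReal.ofReal_eq_zero, not_le]
        positivity
      have hnetop : P (B (m+1)) ≠ ⊤ := measure_ne_top P _
      calc P ({ω | n < τ (m+1+1) ω} ∩ B (m+1))
          = P ({ω | n < τ (m+2) ω} ∩ B (m+1)) / P (B (m+1)) * P (B (m+1)) :=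
            (ENNReal.div_mul_cancel hne0 hnetop).symm
        _ = ENNReal.ofReal (q^n) * P (B (m+1)) := by rw [h2]
  -- characterization of the level sets of L
  have hLm : ∀ m : ℕ, {ω | L ω = m + 1} = B m ∩ {ω | τ (m+1) ω ≤ t (m+1)} := by
    intro m
    ext ω
    simp only [Set.mem_setOf_eq, Set.mem_inter_iff, hBmem]
    rw [hL ω]
    constructor
    · intro h
      have hne : {k | 1 ≤ k ∧ τ k ω ≤ t k}.Nonempty := by
        by_contra hcon
        rw [Set.not_nonempty_iff_eq_empty] at hcon
        rw [hcon, Nat.sInf_empty] at h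
        omega
      have hmem := Nat.sInf_mem hne
      rw [h] at hmem
      refine ⟨fun j h1' h2' => ?_, hmem.2⟩
      by_contra hc
      push_neg at hc
      have hjm : j ∈ {k | 1 ≤ k ∧ τ k ω ≤ t k} := ⟨h1', hc⟩
      have := Nat.sInf_le hjm
      omega
    · rintro ⟨hB', hτ'⟩
      have hmem : m + 1 ∈ {k | 1 ≤ k ∧ τ k ω ≤ t k} := ⟨by omega, hτ'⟩
      have hle := Nat.sInf_le hmem
      have hmem2 := Nat.sInf_mem (Set.nonempty_of_mem hmem)
      by_contra hne
      have hlt : sInf {k | 1 ≤ k ∧ τ k ω ≤ t k} < m + 1 := lt_of_le_of_ne hle hne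
      have := hB' _ hmem2.1 (by omega)
      have := hmem2.2
      omega
  have hL0sub : ∀ m, {ω | L ω = 0} ⊆ B m := by
    intro m ω hω
    rw [Set.mem_setOf_eq, hL ω] at hω
    rw [hBmem]
    intro j h1' h2'
    by_contra hc
    push_neg at hc
    have hmem : j ∈ {k | 1 ≤ k ∧ τ k ω ≤ t k} := ⟨h1', hc⟩
    have h0 := Nat.sInf_mem (Set.nonempty_of_mem hmem)
    rw [hω] at h0
    exact absurd h0.1 (by omega)
  have hqpow : Filter.Tendsto (fun m => q ^ s m) Filter.atTop (nhds 0) :=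
    (tendsto_pow_atTop_nhds_zero_of_lt_one hq0.le hq1).comp hdiv'
  have hL0null : P {ω | L ω = 0} = 0 := by
    have hle : ∀ m, P {ω | L ω = 0} ≤ ENNReal.ofReal (q ^ s m) := fun m =>
      (key m).1 ▸ measure_mono (hL0sub m)
    have htend : Filter.Tendsto (fun m => ENNReal.ofReal (q ^ s m)) Filter.atTop (nhds 0) := by
      have := (ENNReal.continuous_ofReal.tendsto 0).comp hqpow
      simpa [Function.comp_def] using this
    exact le_zero_iff.mp (ge_of_tendsto' htend hle)
  have hLset : ∀ m, MeasurableSet {ω | L ω = m} := by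
    intro m
    match m with
    | Nat.succ m =>
      rw [hLm m]
      exact (hBmeas m).inter
        ((hτmeas (m+1)) (show MeasurableSet {x : ℕ | x ≤ t (m+1)} from trivial))
    | 0 =>
      have : {ω | L ω = 0} = (⋃ m, {ω | L ω = m + 1})ᶜ := by
        ext ω
        simp only [Set.mem_setOf_eq, Set.mem_compl_iff, Set.mem_iUnion]
        constructor
        · rintro h ⟨m, hm⟩; omega
        · intro h
          rcases Nat.eq_zero_or_pos (L ω) with h0 | h0
          · exact h0
          · exact absurd ⟨L ω - 1, by omega⟩ h
      rw [this]
      exact (MeasurableSet.iUnion fun m => by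
        rw [hLm m]
        exact (hBmeas m).inter
          ((hτmeas (m+1)) (show MeasurableSet {x : ℕ | x ≤ t (m+1)} from trivial))).compl
  -- the accumulated escape time
  set X : Ω → ℕ := fun ω => s (L ω - 1) + τ (L ω) ω with hXdef
  have hXmeasSet : ∀ k : ℕ, MeasurableSet {ω | X ω = k} := by
    intro k
    have hXk : {ω | X ω = k} = ⋃ m, ({ω | L ω = m} ∩ {ω | s (m - 1) + τ m ω = k}) := by
      ext ω
      simp only [Set.mem_setOf_eq, Set.mem_iUnion, Set.mem_inter_iff, hXdef]
      constructor
      · intro h; exact ⟨L ω, rfl, h⟩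
      · rintro ⟨m, hm, h2⟩; rw [hm]; exact h2
    rw [hXk]
    exact MeasurableSet.iUnion fun m => (hLset m).inter
      ((hτmeas m) (show MeasurableSet {x : ℕ | s (m-1) + x = k} from trivial))
  have hXmeas : Measurable X := measurable_to_countable' hXmeasSet
  have hXgtMeas : ∀ k : ℕ, MeasurableSet {ω | k < X ω} :=
    fun k => hXmeas (show MeasurableSet {x : ℕ | k < x} from trivial)
  -- distribution of X
  have hXgt : ∀ n : ℕ, P {ω | n < X ω} = ENNReal.ofReal (q ^ n) := by
    intro n
    set b : ℕ → ℝ := fun m => q ^ (max n (s m)) with hbdef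
    have hbanti : ∀ m, b (m+1) ≤ b m := fun m =>
      pow_le_pow_of_le_one hq0.le hq1.le (max_le_max le_rfl (hsmono (Nat.le_succ m)))
    set E : ℕ → Set Ω := fun m => {ω | L ω = m + 1} ∩ {ω | n < X ω} with hEdef
    have hEmeas : ∀ m, MeasurableSet (E m) := fun m => (hLset (m+1)).inter (hXgtMeas n)
    have hEeq : ∀ m, E m =
        (B m ∩ {ω | n - s m < τ (m+1) ω}) \ (B m ∩ {ω | t (m+1) < τ (m+1) ω}) := by
      intro m
      ext ω
      have hiff := Set.ext_iff.mp (hLm m) ω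
      simp only [Set.mem_setOf_eq, Set.mem_inter_iff] at hiff
      have hτp := hτpos (m+1) ω (by omega)
      simp only [hEdef, Set.mem_inter_iff, Set.mem_setOf_eq, Set.mem_diff, hXdef]
      constructor
      · rintro ⟨hLω, hXω⟩
        rcases hiff.mp hLω with ⟨hBω, hτω⟩
        rw [hLω] at hXω
        simp only [Nat.add_sub_cancel] at hXω
        exact ⟨⟨hBω, by omega⟩, fun hc => by omega⟩
      · rintro ⟨⟨hBω, hlt⟩, hnot⟩
        have hτle : τ (m+1) ω ≤ t (m+1) := by
          by_contra hc
          exact hnot ⟨hBω, by omega⟩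
        have hLω : L ω = m + 1 := hiff.mpr ⟨hBω, hτle⟩
        refine ⟨hLω, ?_⟩
        rw [hLω]
        simp only [Nat.add_sub_cancel]
        omega
    have hEP : ∀ m, P (E m) = ENNReal.ofReal (b m - b (m+1)) := by
      intro m
      have hBcap : B m ∩ {ω | t (m+1) < τ (m+1) ω} = B (m+1) := by
        rw [hBsucc m, Set.inter_comm]
      rcases le_or_gt n (s (m+1)) with hcase | hcase
      · have hsub : B m ∩ {ω | t (m+1) < τ (m+1) ω} ⊆ B m ∩ {ω | n - s m < τ (m+1) ω} := by
          rintro ω ⟨h1', h2'⟩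
          refine ⟨h1', ?_⟩
          have := hssucc m
          simp only [Set.mem_setOf_eq] at h2' ⊢
          omega
        rw [hEeq m, measure_diff hsub (((hBmeas m).inter
          ((hτmeas (m+1)) (show MeasurableSet {x : ℕ | t (m+1) < x} from trivial))).nullMeasurableSet)
          (measure_ne_top P _)]
        rw [hBcap, Set.inter_comm, (key m).2 (n - s m), (key (m+1)).1, (key m).1,
          ← ENNReal.ofReal_mul (by positivity), ← pow_add,
          ← ENNReal.ofReal_sub _ (by positivity)]
        congr 1
        have h1'' : n - s m + s m = max n (s m) := by omega
        have h2'' : max n (s (m+1)) = s (m+1) := by omega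
        rw [hbdef]
        simp only [h1'', h2'']
      · have hE0 : E m = ∅ := by
          rw [hEeq m]
          rw [Set.eq_empty_iff_forall_notMem]
          rintro ω ⟨⟨hBω, hlt⟩, hnot⟩
          have := hssucc m
          simp only [Set.mem_setOf_eq] at hlt
          exact hnot ⟨hBω, by simp only [Set.mem_setOf_eq]; omega⟩
        have hb1 : max n (s m) = n := by
          have := hssucc m
          have := hsmono (Nat.le_succ m)
          omega
        have hb2 : max n (s (m+1)) = n := by omega
        rw [hE0, measure_empty, hbdef]
        simp only [hb1, hb2, sub_self, ENNReal.ofReal_zero]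
    have hdisj : Pairwise (Function.onFun Disjoint E) := by
      intro i j hij
      refine Set.disjoint_left.mpr ?_
      rintro ω ⟨hi, _⟩ ⟨hj, _⟩
      simp only [Set.mem_setOf_eq] at hi hj
      exact hij (by omega)
    have hUnion : P {ω | n < X ω} = ∑' m, P (E m) := by
      rw [← measure_iUnion hdisj hEmeas]
      apply le_antisymm
      · have hsub2 : {ω | n < X ω} ⊆ (⋃ m, E m) ∪ {ω | L ω = 0} := by
          intro ω hω
          rcases Nat.eq_zero_or_pos (L ω) with h0 | hpos
          · exact Or.inr h0
          · refine Or.inl (Set.mem_iUnion.mpr ⟨L ω - 1, ?_, hω⟩)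
            simp only [Set.mem_setOf_eq]
            omega
        calc P {ω | n < X ω} ≤ P ((⋃ m, E m) ∪ {ω | L ω = 0}) := measure_mono hsub2
          _ ≤ P (⋃ m, E m) + P {ω | L ω = 0} := measure_union_le _ _
          _ = P (⋃ m, E m) := by rw [hL0null, add_zero]
      · exact measure_mono (Set.iUnion_subset fun m => Set.inter_subset_right)
    have hpart : ∀ M, ∑ m ∈ Finset.range M, P (E m) = ENNReal.ofReal (q ^ n - b M) := by
      intro M
      rw [Finset.sum_congr rfl (fun m _ => hEP m),
        ← ENNReal.ofReal_sum_of_nonneg (fun m _ => sub_nonneg.mpr (hbanti m)),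
        Finset.sum_range_sub' b]
      congr 2
      rw [hbdef]
      simp [hs0]
    have htends : Filter.Tendsto (fun M => ENNReal.ofReal (q ^ n - b M)) Filter.atTop
        (nhds (ENNReal.ofReal (q ^ n))) := by
      have hb0 : Filter.Tendsto b Filter.atTop (nhds 0) := by
        have hmax : Filter.Tendsto (fun M => max n (s M)) Filter.atTop Filter.atTop :=
          Filter.tendsto_atTop_mono (fun M => le_max_right _ _) hdiv'
        exact (tendsto_pow_atTop_nhds_zero_of_lt_one hq0.le hq1).comp hmax
      have h2' : Filter.Tendsto (fun M => q ^ n - b M) Filter.atTop (nhds (q ^ n - 0)) :=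
        tendsto_const_nhds.sub hb0
      rw [sub_zero] at h2'
      exact (ENNReal.continuous_ofReal.tendsto _).comp h2'
    rw [hUnion]
    have hts := ENNReal.tendsto_nat_tsum fun m => P (E m)
    simp only [hpart] at hts
    exact tendsto_nhds_unique hts htends
  have hXone : P {ω | 0 < X ω} = 1 := by
    rw [hXgt 0]; simp
  have hX0 : P {ω | X ω = 0} = 0 := by
    have hc : {ω | X ω = 0} = {ω | 0 < X ω}ᶜ := by
      ext ω; simp only [Set.mem_setOf_eq, Set.mem_compl_iff, not_lt]; omega
    rw [hc, measure_compl (hXgtMeas 0) (measure_ne_top P _), hXone, measure_univ, tsub_self]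
  have hXsucc : ∀ k : ℕ, P {ω | X ω = k + 1} = ENNReal.ofReal (q ^ k * p) := by
    intro k
    have hset : {ω | X ω = k + 1} = {ω | k < X ω} \ {ω | k + 1 < X ω} := by
      ext ω
      simp only [Set.mem_setOf_eq, Set.mem_diff, not_lt]
      omega
    have hsub : {ω | k + 1 < X ω} ⊆ {ω | k < X ω} := by
      intro ω hω; simp only [Set.mem_setOf_eq] at hω ⊢; omega
    rw [hset, measure_diff hsub ((hXgtMeas (k+1)).nullMeasurableSet) (measure_ne_top P _),
      hXgt, hXgt, ← ENNReal.ofReal_sub _ (by positivity)]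
    congr 1
    rw [pow_succ, hqdef]
    ring
  -- the moment generating function
  have hr : q * Real.exp u < 1 := by
    have h1' : Real.exp u < q⁻¹ := by
      have h2' := Real.exp_lt_exp.mpr hu
      rwa [Real.exp_neg, Real.exp_log hq0] at h2'
    calc q * Real.exp u < q * q⁻¹ := by exact mul_lt_mul_of_pos_left h1' hq0
      _ = 1 := mul_inv_cancel₀ (ne_of_gt hq0)
  have hrpos : (0:ℝ) < 1 - q * Real.exp u := sub_pos.mpr hr
  have hfmeas : Measurable fun ω => Real.exp (u * (X ω : ℝ)) :=
    Real.measurable_exp.comp (measurable_const.mul (measurable_from_nat.comp hXmeas))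
  have hint : ∫ ω, Real.exp (u * (X ω : ℝ)) ∂P
      = (∫⁻ ω, ENNReal.ofReal (Real.exp (u * (X ω : ℝ))) ∂P).toReal :=
    integral_eq_lintegral_of_nonneg_ae (Filter.Eventually.of_forall fun ω => (Real.exp_pos _).le)
      hfmeas.aestronglyMeasurable
  have hlint : ∫⁻ ω, ENNReal.ofReal (Real.exp (u * (X ω : ℝ))) ∂P
      = ∑' k : ℕ, ENNReal.ofReal (Real.exp (u * (k : ℝ))) * P {ω | X ω = k} := by
    rw [← lintegral_map (f := fun k : ℕ => ENNReal.ofReal (Real.exp (u * (k:ℝ))))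
      measurable_from_nat hXmeas, lintegral_countable']
    congr 1
    funext k
    rw [Measure.map_apply hXmeas (measurableSet_singleton k)]
    rfl
  have hsummable : Summable fun k : ℕ => (p * Real.exp u) * (q * Real.exp u) ^ k :=
    (summable_geometric_of_lt_one (by positivity) hr).mul_left _
  have htsum : (∑' k : ℕ, ENNReal.ofReal (Real.exp (u * (k:ℝ))) * P {ω | X ω = k})
      = ENNReal.ofReal (p * Real.exp u * (1 - q * Real.exp u)⁻¹) := by
    rw [tsum_eq_zero_add' ENNReal.summable, hX0, mul_zero, zero_add]
    have hterm : ∀ k : ℕ, ENNReal.ofReal (Real.exp (u * ((k + 1 : ℕ) : ℝ))) * P {ω | X ω = k + 1}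
        = ENNReal.ofReal ((p * Real.exp u) * (q * Real.exp u) ^ k) := by
      intro k
      rw [hXsucc k, ← ENNReal.ofReal_mul (Real.exp_pos _).le]
      congr 1
      push_cast
      have harg : u * ((k:ℝ) + 1) = (k:ℝ) * u + u := by ring
      rw [harg, Real.exp_add, Real.exp_nat_mul, mul_pow]
      ring
    rw [tsum_congr hterm, ← ENNReal.ofReal_tsum_of_nonneg (fun k => by positivity) hsummable,
      tsum_mul_left, tsum_geometric_of_lt_one (by positivity) hr]
  have hgoalfun : ∀ ω, Real.exp (u * (((∑ i ∈ Finset.Icc 1 (L ω - 1), t i : ℕ) : ℝ)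
      + (τ (L ω) ω : ℝ))) = Real.exp (u * (X ω : ℝ)) := by
    intro ω
    simp only [hXdef, hsdef, Nat.cast_add]
  calc ∫ ω, Real.exp (u * (((∑ i ∈ Finset.Icc 1 (L ω - 1), t i : ℕ) : ℝ)
          + (τ (L ω) ω : ℝ))) ∂P
      = ∫ ω, Real.exp (u * (X ω : ℝ)) ∂P := by
        apply integral_congr_ae
        exact Filter.Eventually.of_forall hgoalfun
    _ = (∫⁻ ω, ENNReal.ofReal (Real.exp (u * (X ω : ℝ))) ∂P).toReal := hint
    _ = (ENNReal.ofReal (p * Real.exp u * (1 - q * Real.exp u)⁻¹)).toReal := by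
        rw [hlint, htsum]
    _ = p * Real.exp u * (1 - q * Real.exp u)⁻¹ :=
        ENNReal.toReal_ofReal (mul_nonneg (by positivity) (inv_nonneg.mpr hrpos.le))
    _ = p * Real.exp u / (1 - q * Real.exp u) := (div_eq_mul_inv _ _).symm
end
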